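/- arXiv:2504.16819 — 7 statements merged into one kernel-verified Lean document; each statement's English description precedes it below -/
import Mathlib

section
/- For all n, k, d ∈ ℕ with 1 ≤ k ≤ d, the recursively defined universal tree U_{n,k,d} has n-Strahler number exactly k. -/
/-- Ordered trees of finite depth: a node with children indexed by a type `K`
equipped with an order relation `lt`. The leaf is a node with empty `K`. -/
inductive OTree : Type 1
  | node (K : Type) (lt : K → K → Prop) (children : K → OTree) : OTree

namespace OTree

/-- The depth of an ordered tree (the leaf has depth 1). -/
noncomputable def depth : OTree → ℕ∞
  | .node _ _ f => 1 + ⨆ k, depth (f k)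

open scoped Classical in
/-- The `n`-Strahler number of an ordered tree: the leaf has `n`-Strahler number 1; for a
non-leaf tree whose children have maximal `n`-Strahler number `m`, it is `m+1` if at least
`n+1` children attain `m`, and `m` otherwise. -/
noncomputable def strahler (n : ℕ) : OTree → ℕ∞
  | .node K _ f =>
    if IsEmpty K then 1
    else
      if ∃ g : Fin (n+1) → K, Function.Injective g ∧
          ∀ a, strahler n (f (g a)) = ⨆ k, strahler n (f k)
      then (⨆ k, strahler n (f k)) + 1 else ⨆ k, strahler n (f k)

/-- Isomorphic embedding of ordered trees: a strictly increasing map on children indices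
such that each child embeds in its image (when the index set is empty such a map
trivially exists). -/
inductive Emb : OTree → OTree → Prop
  | mk {K lt f K' lt' f'} (φ : K → K') (hinj : Function.Injective φ)
      (hmono : ∀ a b, lt a b → lt' (φ a) (φ b))
      (h : ∀ k, Emb (f k) (f' (φ k))) :
      Emb (.node K lt f) (.node K' lt' f')

/-- `s` is a child of `t`. -/
def IsChild (s t : OTree) : Prop :=
  match t with
  | .node _ _ f => ∃ k, s = f k

/-- The subtree relation: reflexive-transitive closure of the child relation. -/
def Subtree (s t : OTree) : Prop := Relation.ReflTransGen IsChild s t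

end OTree
/-- The universal tree `U_{n,k,d}`: for `1 ≤ k ≤ d`, its children consist of `n+1` blocks of
ω copies of `U_{n,k-1,d-1}` (omitted when `k = 1`), interleaved with `n` single copies of
`U_{n,k,d-1}` (omitted when `d - 1 < k`).  Children are indexed by the lexicographic order on
`Fin (2n+1) ×ₗ ℕ`, where even first coordinates carry the ω-blocks and odd first coordinates
carry (at second coordinate 0) the single copies. For `d = 0` (a junk case) it is the leaf. -/
def Ut (n : ℕ) : ℕ → ℕ → OTree
  | _, 0 => .node Empty (fun _ _ => False) (fun e => e.elim)
  | k, d+1 =>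
    .node {q : Lex (Fin (2*n+1) × ℕ) //
            ((ofLex q).1.val % 2 = 0 ∧ 2 ≤ k) ∨
            ((ofLex q).1.val % 2 = 1 ∧ (ofLex q).2 = 0 ∧ k ≤ d)}
      (· < ·)
      (fun q => if (ofLex q.val).1.val % 2 = 0 then Ut n (k-1) d else Ut n k d)

open scoped Classical in
lemma strahler_node_eq (n : ℕ) (K : Type) (lt : K → K → Prop) (f : K → OTree) :
    OTree.strahler n (.node K lt f) =
      if IsEmpty K then 1
      else if ∃ g : Fin (n+1) → K, Function.Injective g ∧
          ∀ a, OTree.strahler n (f (g a)) = ⨆ j, OTree.strahler n (f j)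
      then (⨆ j, OTree.strahler n (f j)) + 1 else ⨆ j, OTree.strahler n (f j) := by
  rw [OTree.strahler]

lemma no_big_inj {n : ℕ} {P : Lex (Fin (2*n+1) × ℕ) → Prop}
    (g : Fin (n+1) → {q // P q}) (hg : Function.Injective g)
    (hodd : ∀ a, (ofLex (g a).val).1.val % 2 = 1)
    (hzero : ∀ a, (ofLex (g a).val).2 = 0) : False := by
  have h' : Function.Injective (fun a : Fin (n+1) => (⟨(ofLex (g a).val).1.val / 2, by
      have h1 := (ofLex (g a).val).1.isLt
      have h2 := hodd a
      omega⟩ : Fin n)) := by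
    intro a b hab
    have hv := congrArg Fin.val hab
    simp only at hv
    have h2a := hodd a; have h2b := hodd b
    have hvv : (ofLex (g a).val).1.val = (ofLex (g b).val).1.val := by omega
    apply hg
    apply Subtype.ext
    apply ofLex.injective
    exact Prod.ext (Fin.ext hvv) (by rw [hzero a, hzero b])
  have := Fintype.card_le_of_injective _ h'
  simp [Fintype.card_fin] at this

/-- for all n, k, d with 1 ≤ k ≤ d, the universal tree U_{n,k,d} has
n-Strahler number exactly k. -/
theorem strahler_Ut (n k d : ℕ) (hk : 1 ≤ k) (hkd : k ≤ d) :
    OTree.strahler n (Ut n k d) = (k : ℕ∞) := by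
  induction d generalizing k with
  | zero => omega
  | succ d ih =>
    rw [Ut, strahler_node_eq]
    set K := {q : Lex (Fin (2*n+1) × ℕ) //
            ((ofLex q).1.val % 2 = 0 ∧ 2 ≤ k) ∨
            ((ofLex q).1.val % 2 = 1 ∧ (ofLex q).2 = 0 ∧ k ≤ d)} with hK
    set f : K → OTree :=
      fun q => if (ofLex q.val).1.val % 2 = 0 then Ut n (k-1) d else Ut n k d with hf
    rcases Nat.lt_or_ge k 2 with hk2 | hk2
    · -- k = 1
      have hk1 : k = 1 := by omega
      subst hk1
      by_cases hE : IsEmpty K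
      · rw [if_pos hE]
        try norm_num
      · rw [if_neg hE, if_neg]
        · have hall : ∀ q : K, OTree.strahler n (f q) = 1 := by
            intro q
            show OTree.strahler n
              (if (ofLex q.val).1.val % 2 = 0 then Ut n (1-1) d else Ut n 1 d) = 1
            rcases q.2 with ⟨_, h2⟩ | ⟨h1, _, hle⟩
            · omega
            · rw [if_neg (by omega)]
              exact_mod_cast ih 1 le_rfl hle
          have : Nonempty K := not_isEmpty_iff.mp hE
          rw [iSup_congr hall, iSup_const]
          try norm_num
        · rintro ⟨g, hginj, -⟩
          refine no_big_inj g hginj (fun a => ?_) (fun a => ?_)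
          · rcases (g a).2 with ⟨_, h2⟩ | ⟨h1, _, _⟩
            · omega
            · exact h1
          · rcases (g a).2 with ⟨_, h2⟩ | ⟨_, h0, _⟩
            · omega
            · exact h0
    · -- k ≥ 2
      have q0 : K := ⟨toLex (⟨0, by omega⟩, 0), Or.inl ⟨by simp, hk2⟩⟩
      rw [if_neg (not_isEmpty_iff.mpr ⟨q0⟩)]
      by_cases hmix : 1 ≤ n ∧ k ≤ d
      · -- mixed case: odd children exist
        obtain ⟨hn1, hkd'⟩ := hmix
        have hsup : (⨆ j : K, OTree.strahler n (f j)) = (k : ℕ∞) := by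
          apply le_antisymm
          · apply iSup_le
            intro q
            show OTree.strahler n
              (if (ofLex q.val).1.val % 2 = 0 then Ut n (k-1) d else Ut n k d) ≤ _
            split_ifs with h
            · rw [ih (k-1) (by omega) (by omega)]
              exact_mod_cast Nat.sub_le k 1
            · rw [ih k (by omega) hkd']
          · have hle : OTree.strahler n
                (f ⟨toLex (⟨1, by omega⟩, 0), Or.inr ⟨by simp, rfl, hkd'⟩⟩) = (k : ℕ∞) := by
              show OTree.strahler n
                (if (1:ℕ) % 2 = 0 then Ut n (k-1) d else Ut n k d) = _
              rw [if_neg (by norm_num)]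
              exact ih k (by omega) hkd'
            rw [← hle]
            exact le_iSup (fun j => OTree.strahler n (f j)) _
        rw [if_neg, hsup]
        rintro ⟨g, hginj, hgval⟩
        have hodd : ∀ a, (ofLex (g a).val).1.val % 2 = 1 := by
          intro a
          rcases Nat.mod_two_eq_zero_or_one (ofLex (g a).val).1.val with h | h
          · exfalso
            have hv := hgval a
            rw [hsup] at hv
            rw [if_pos h] at hv
            rw [ih (k-1) (by omega) (by omega)] at hv
            have hvk : k - 1 = k := by exact_mod_cast hv
            omega
          · exact h
        refine no_big_inj g hginj hodd (fun a => ?_)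
        rcases (g a).2 with ⟨he, _⟩ | ⟨_, h0, _⟩
        · exact absurd he (by have := hodd a; omega)
        · exact h0
      · -- all children even: Ut n (k-1) d
        have heven : ∀ q : K, (ofLex q.val).1.val % 2 = 0 := by
          intro q
          rcases q.2 with ⟨he, _⟩ | ⟨h1, _, hle⟩
          · exact he
          · exfalso
            have := (ofLex q.val).1.isLt
            exact hmix ⟨by omega, hle⟩
        have hall : ∀ q : K, OTree.strahler n (f q) = ((k-1 : ℕ) : ℕ∞) := by
          intro q
          show OTree.strahler n
            (if (ofLex q.val).1.val % 2 = 0 then Ut n (k-1) d else Ut n k d) = _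
          rw [if_pos (heven q)]
          exact ih (k-1) (by omega) (by omega)
        have : Nonempty K := ⟨q0⟩
        have hsup : (⨆ j : K, OTree.strahler n (f j)) = ((k-1 : ℕ) : ℕ∞) := by
          rw [iSup_congr hall, iSup_const]
        rw [if_pos, hsup]
        · have h1 : k - 1 + 1 = k := by omega
          rw [show ((k:ℕ):ℕ∞) = ((k - 1 + 1 : ℕ) : ℕ∞) from by rw [h1],
            Nat.cast_add, Nat.cast_one]
        · refine ⟨fun a => ⟨toLex (⟨0, by omega⟩, a.val), Or.inl ⟨by simp, hk2⟩⟩, ?_, ?_⟩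
          · intro a b hab
            have h2 := congrArg (fun q : K => (ofLex q.val).2) hab
            simp only [ofLex_toLex] at h2
            exact Fin.ext h2
          · intro a
            rw [hsup]
            exact hall _
end

section
/- For every n, k, d ∈ ℕ with k ≥ 1 and d ≥ 1, the tree U_{n, min(k,d), d} is universal for the collection of all finite ordered trees of depth at most d and n-Strahler number at most k; that is, every such finite tree is isomorphically embedded in U_{n, min(k,d), d}. -/
namespace OTree

/-- A tree is finite if all index sets of children appearing in it are finite. -/
inductive IsFinite : OTree → Prop
  | node {K lt f} (hK : Finite K) (h : ∀ k, IsFinite (f k)) : IsFinite (.node K lt f)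

/-- A well-formed ordered tree: all children index sets are countable and well-ordered. -/
inductive Ordered : OTree → Prop
  | node {K lt f} (hwo : IsWellOrder K lt) (hc : Countable K) (h : ∀ k, Ordered (f k)) :
      Ordered (.node K lt f)

end OTree

/-!
Induct on the finite tree `T`, with `κ = min k d`: the Strahler number is at most the depth, so
`S_n(T) ≤ κ`. Hence at most `n` children of `T` attain `κ`, and all others have Strahler number
at most `κ - 1`. The children attaining `κ` go, in order, to the `n` single copies of
`U_{n,κ,d-1}`; the others go to the ω-blocks of `U_{n,κ-1,d-1}` between them, which have room for
any finite number of children.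
-/

open Finset

namespace Finset

variable {α : Type*} [Preorder α] [DecidableLT α] (s : Finset α)

theorem card_filter_lt_mono {a b : α} (hab : a ≤ b) : #{x ∈ s | x < a} ≤ #{x ∈ s | x < b} :=
  card_le_card <| monotone_filter_right s fun _ _ hx => hx.trans_le hab

theorem card_filter_lt_lt_of_mem {a b : α} (ha : a ∈ s) (hab : a < b) :
    #{x ∈ s | x < a} < #{x ∈ s | x < b} := by
  refine card_lt_card ⟨monotone_filter_right s fun _ _ hx => hx.trans hab, fun h => ?_⟩
  exact lt_irrefl a (mem_filter.mp (h (mem_filter.mpr ⟨ha, hab⟩))).2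

theorem card_filter_lt_lt_card {a : α} (ha : a ∈ s) : #{x ∈ s | x < a} < #s :=
  card_lt_card <| filter_ssubset.mpr ⟨a, ha, lt_irrefl a⟩

end Finset

namespace OTree

theorem one_le_depth : ∀ T : OTree, 1 ≤ T.depth
  | .node _ _ _ => by rw [depth]; exact le_self_add

theorem depth_child_le {K : Type} {lt : K → K → Prop} {f : K → OTree} {d : ℕ}
    (h : (node K lt f).depth ≤ (d + 1 : ℕ)) (a : K) : (f a).depth ≤ d := by
  rw [depth, Nat.cast_add, Nat.cast_one, add_comm] at h
  exact (le_iSup (fun k => depth (f k)) a).trans (WithTop.le_of_add_le_add_right ENat.one_ne_top h)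

theorem one_le_strahler (n : ℕ) : ∀ T : OTree, 1 ≤ T.strahler n
  | .node K lt f => by
    rw [strahler]
    split_ifs with hK
    · exact le_rfl
    all_goals
      obtain ⟨a⟩ := not_isEmpty_iff.mp hK
      have h := (one_le_strahler n (f a)).trans (le_iSup (fun k => strahler n (f k)) a)
    · exact h.trans le_self_add
    · exact h

theorem strahler_le_depth (n : ℕ) : ∀ T : OTree, T.strahler n ≤ T.depth
  | .node K lt f => by
    have hsup : (⨆ k, strahler n (f k)) ≤ ⨆ k, depth (f k) :=
      iSup_mono fun k => strahler_le_depth n (f k)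
    rw [strahler, depth]
    split_ifs
    · exact le_self_add
    · exact (add_le_add_left hsup 1).trans_eq (add_comm _ _)
    · exact hsup.trans le_add_self

theorem strahler_child_le (n : ℕ) {K : Type} (lt : K → K → Prop) (f : K → OTree) (a : K) :
    (f a).strahler n ≤ (node K lt f).strahler n := by
  have h := le_iSup (fun k => strahler n (f k)) a
  rw [strahler]
  split_ifs with hK
  · exact (hK.false a).elim
  · exact h.trans le_self_add
  · exact h

/-- If `n + 1` children shared the maximal value `c`, the `n`-Strahler number would be `c + 1`. -/
theorem card_strahler_eq_le (n : ℕ) {K : Type} [Fintype K] (lt : K → K → Prop) (f : K → OTree)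
    {c : ℕ} (h : (node K lt f).strahler n ≤ c) : #{a | (f a).strahler n = c} ≤ n := by
  by_contra! hcard
  obtain ⟨g⟩ : Nonempty (Fin (n + 1) ↪ {a // (f a).strahler n = c}) :=
    Function.Embedding.nonempty_of_card_le (by simpa [Fintype.card_subtype] using hcard)
  have hsup : (⨆ k, strahler n (f k)) = c :=
    le_antisymm (iSup_le fun k => (strahler_child_le n lt f k).trans h)
      ((g 0).2.symm.trans_le (le_iSup (fun k => strahler n (f k)) (g 0)))
  have hmany : ∃ g : Fin (n + 1) → K, Function.Injective g ∧
      ∀ i, strahler n (f (g i)) = ⨆ k, strahler n (f k) :=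
    ⟨fun i => g i, Subtype.val_injective.comp g.injective, fun i => (g i).2.trans hsup.symm⟩
  rw [strahler, if_neg fun hK => hK.false (g 0), if_pos hmany, hsup] at h
  exact (ENat.add_one_le_natCast_iff.mp h).false

theorem Emb.node_Ut_succ {n κ d : ℕ} {K : Type} [LinearOrder K] [Fintype K] (f : K → OTree)
    (B : Finset K) (hB : #B ≤ n) (big : ∀ a ∈ B, κ ≤ d ∧ Emb (f a) (Ut n κ d))
    (small : ∀ a ∉ B, 2 ≤ κ ∧ Emb (f a) (Ut n (κ - 1) d)) :
    Emb (node K (· < ·) f) (Ut n κ (d + 1)) := by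
  set r : K → ℕ := fun a => #{x ∈ B | x < a}
  have hr : ∀ a, r a ≤ n := fun a => (card_le_card (filter_subset _ B)).trans hB
  have hr_big : ∀ a ∈ B, r a < n := fun a ha => (card_filter_lt_lt_card B ha).trans_le hB
  -- a child with `j` members of `B` before it goes to the `j`-th single slot if it lies in `B`,
  -- and into the `j`-th ω-block otherwise
  let pos : K → Fin (2 * n + 1) × ℕ := fun a =>
    if ha : a ∈ B then (⟨2 * r a + 1, by grind⟩, 0) else (⟨2 * r a, by grind⟩, #{x | x < a})
  have hpos_even : ∀ a, (pos a).1.val % 2 = 0 ↔ a ∉ B := by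
    intro a
    by_cases ha : a ∈ B <;> simp [pos, ha]
  have hpos : StrictMono fun a => toLex (pos a) := by
    intro a b hab
    have hr_mono : r a ≤ r b := card_filter_lt_mono B hab.le
    have hrank := card_filter_lt_lt_of_mem univ (mem_univ a) hab
    rw [Prod.Lex.lt_iff]
    by_cases ha : a ∈ B
    · have hr_lt : r a < r b := card_filter_lt_lt_of_mem B ha hab
      by_cases hb : b ∈ B <;> simp [pos, ha, hb] <;> omega
    · by_cases hb : b ∈ B <;> simp [pos, ha, hb] <;> omega
  have hmem : ∀ a, ((ofLex (toLex (pos a))).1.val % 2 = 0 ∧ 2 ≤ κ) ∨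
      ((ofLex (toLex (pos a))).1.val % 2 = 1 ∧ (ofLex (toLex (pos a))).2 = 0 ∧ κ ≤ d) := by
    intro a
    by_cases ha : a ∈ B
    · exact .inr ⟨by simp [pos, ha], by simp [pos, ha], (big a ha).1⟩
    · exact .inl ⟨(hpos_even a).2 ha, (small a ha).1⟩
  rw [Ut]
  refine Emb.mk (fun a => ⟨toLex (pos a), hmem a⟩) (fun a b h => hpos.injective congr($h.1))
    (fun a b h => hpos h) fun a => ?_
  by_cases ha : a ∈ B
  · simpa only [ofLex_toLex, hpos_even, ha, not_true, if_false] using (big a ha).2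
  · simpa only [ofLex_toLex, hpos_even, ha, not_false_eq_true, if_true] using (small a ha).2

theorem emb_Ut_of_strahler_le (n : ℕ) {T : OTree} (hfin : T.IsFinite) (hord : T.Ordered)
    {κ d : ℕ} (hκd : κ ≤ d) (hdepth : T.depth ≤ d) (hstr : T.strahler n ≤ κ) :
    Emb T (Ut n κ d) := by
  induction hfin generalizing κ d with
  | @node K lt f _ _ ih =>
  cases hord with
  | node hwo _ hord =>
  obtain _ | d := d
  · exact absurd ((one_le_depth _).trans hdepth) (by simp)
  let := IsWellOrder.linearOrder lt
  have := Fintype.ofFinite K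
  have hdepth' := depth_child_le hdepth
  refine Emb.node_Ut_succ f {a | (f a).strahler n = κ} (card_strahler_eq_le n lt f hstr)
    (fun a ha => ?_) (fun a ha => ?_)
  · have ha : (f a).strahler n = κ := (mem_filter.mp ha).2
    have hκ : κ ≤ d := by exact_mod_cast ha ▸ (strahler_le_depth n _).trans (hdepth' a)
    exact ⟨hκ, ih a (hord a) hκ (hdepth' a) ha.le⟩
  · have hlt : (f a).strahler n < κ :=
      ((strahler_child_le n lt f a).trans hstr).lt_of_ne (by simpa using ha)
    have hpos := one_le_strahler n (f a)
    lift (f a).strahler n to ℕ using hlt.ne_top with s hs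
    norm_cast at hlt hpos
    have hs' : (f a).strahler n ≤ (κ - 1 : ℕ) := hs ▸ Nat.cast_le.mpr (by omega)
    exact ⟨by omega, ih a (hord a) (by omega) (hdepth' a) hs'⟩

end OTree

open OTree

theorem Ut_universal_general (n k d : ℕ)
    (T : OTree) (hfin : T.IsFinite) (hord : T.Ordered)
    (hdepth : T.depth ≤ (d : ℕ∞)) (hstr : T.strahler n ≤ (k : ℕ∞)) :
    OTree.Emb T (Ut n (min k d) d) :=
  emb_Ut_of_strahler_le n hfin hord (min_le_right k d) hdepth <| by
    rw [Nat.mono_cast.map_min]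
    exact le_min hstr ((strahler_le_depth n T).trans hdepth)

/-- for every n, k, d with k ≥ 1 and d ≥ 1, the tree U_{n,min(k,d),d} is
universal for the collection of all finite ordered trees of depth at most d and
n-Strahler number at most k: every such tree embeds isomorphically into it. -/
theorem Ut_universal (n k d : ℕ) (hk : 1 ≤ k) (hd : 1 ≤ d)
    (T : OTree) (hfin : T.IsFinite) (hord : T.Ordered)
    (hdepth : T.depth ≤ (d : ℕ∞)) (hstr : T.strahler n ≤ (k : ℕ∞)) :
    OTree.Emb T (Ut n (min k d) d) :=
  Ut_universal_general n k d T hfin hord hdepth hstr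
end

section
/- Let κ be an ordinal, G = (V,E,L) a finitely-branching parity graph (every vertex has finitely many outgoing edges and at least one successor), and (S_k)_{k<κ} pairwise disjoint subsets of V. Define iteratively for k ≤ κ: V_k = V \ ∪_{j<k} A_j and A_k = attr(S_k, G|_{V_k}). Then attr(∪_{k<κ} S_k, G) = ⊔_{k<κ} A_k, and the A_k are pairwise disjoint. -/
/-- A parity graph on vertex type `V`: a set of edges together with a priority labelling. -/
structure PGraph (V : Type) where
  E : Set (V × V)
  L : V × V → ℕ

namespace PGraph

variable {V : Type}

/-- An infinite path along an edge set. -/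
def IsPath (E : Set (V × V)) (ρ : ℕ → V) : Prop := ∀ n, (ρ n, ρ (n+1)) ∈ E

/-- Restriction of an edge set to a set of vertices. -/
def restr (E : Set (V × V)) (W : Set V) : Set (V × V) := E ∩ (W ×ˢ W)

/-- The attractor of a set `X` of edges: vertices of `W` from which every infinite path
in the graph restricted to `W` eventually uses an edge of `X`. -/
def attrE (E : Set (V × V)) (W : Set V) (X : Set (V × V)) : Set V :=
  {v ∈ W | ∀ ρ : ℕ → V, ρ 0 = v → IsPath (restr E W) ρ → ∃ n, (ρ n, ρ (n+1)) ∈ X}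

/-- The attractor of a set `S` of vertices: vertices of `W` from which every infinite path
in the graph restricted to `W` eventually visits `S` (note `S ∩ W ⊆ attrV E W S`). -/
def attrV (E : Set (V × V)) (W : Set V) (S : Set V) : Set V :=
  {v ∈ W | ∀ ρ : ℕ → V, ρ 0 = v → IsPath (restr E W) ρ → ∃ n, ρ n ∈ S}

/-- A sequence of priorities is parity accepting if its limsup is even. -/
def ParityAccepting (c : ℕ → ℕ) : Prop :=
  ∃ p, Even p ∧ (∃ᶠ n in Filter.atTop, c n = p) ∧ (∀ᶠ n in Filter.atTop, c n ≤ p)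

/-- A labelled graph is even if every infinite path is parity accepting. -/
def EvenG (E : Set (V × V)) (L : V × V → ℕ) : Prop :=
  ∀ ρ : ℕ → V, IsPath E ρ → ParityAccepting (fun n => L (ρ n, ρ (n+1)))

/-- The set of edges of priority `h` of the graph restricted to `W`. -/
def Hset (G : PGraph V) (W : Set V) (h : ℕ) : Set (V × V) :=
  {e | e ∈ restr G.E W ∧ G.L e = h}

end PGraph

/-!
Write `Wₖ = V \ ⋃_{j<k} Aⱼ`. The `Aₖ` are disjoint because `Aₖ ⊆ Wₖ`. A path from `Aₖ`
either stays in `Wₖ`, and then meets `Sₖ`, or enters some `Aⱼ` with `j < k`; well-founded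
induction on `k` puts `⋃ₖ Aₖ` inside the attractor. Conversely, a vertex `w` outside `⋃ₖ Aₖ`
has a successor outside it: otherwise, by finite branching, the successors lie in finitely
many layers, and with `m` the largest of them, every successor of `w` inside `Wₘ` lies in `Aₘ`,
so that `w ∈ Aₘ`. Following such successors gives a path avoiding `⋃ₖ Aₖ`, hence every `Sₖ`.
-/

namespace PGraph

variable {V : Type} {E : Set (V × V)}

theorem IsPath.shift {ρ : ℕ → V} (hρ : IsPath E ρ) (m : ℕ) : IsPath E (fun t => ρ (m + t)) :=
  fun t => hρ (m + t)

theorem isPath_restr_iff {W : Set V} {ρ : ℕ → V} :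
    IsPath (restr E W) ρ ↔ IsPath E ρ ∧ ∀ n, ρ n ∈ W :=
  ⟨fun h => ⟨fun n => (h n).1, fun n => (h n).2.1⟩,
    fun h n => ⟨h.1 n, h.2 n, h.2 (n + 1)⟩⟩

theorem isPath_restr_univ {ρ : ℕ → V} : IsPath (restr E Set.univ) ρ ↔ IsPath E ρ := by
  simp [isPath_restr_iff]

theorem exists_isPath_of_forall_exists_succ {P : V → Prop}
    (h : ∀ v, P v → ∃ w, (v, w) ∈ E ∧ P w) {v : V} (hv : P v) :
    ∃ ρ : ℕ → V, ρ 0 = v ∧ IsPath E ρ ∧ ∀ n, P (ρ n) := by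
  choose! f hfE hfP using h
  have hP : ∀ n, P (f^[n] v) := fun n => by
    induction n with
    | zero => exact hv
    | succ n ih => rw [Function.iterate_succ_apply']; exact hfP _ ih
  refine ⟨fun n => f^[n] v, rfl, fun n => ?_, hP⟩
  show (f^[n] v, f^[n + 1] v) ∈ E
  rw [Function.iterate_succ_apply']
  exact hfE _ (hP n)

theorem attrV_subset (W S : Set V) : attrV E W S ⊆ W := Set.sep_subset _ _

theorem mem_attrV_of_mem {W S : Set V} {v : V} (hW : v ∈ W) (hS : v ∈ S) :
    v ∈ attrV E W S :=
  ⟨hW, fun _ h0 _ => ⟨0, h0 ▸ hS⟩⟩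

theorem mem_attrV_of_forall_succ {W S : Set V} {v : V} (hv : v ∈ W)
    (h : ∀ w, (v, w) ∈ restr E W → w ∈ attrV E W S) : v ∈ attrV E W S := by
  refine ⟨hv, fun ρ h0 hρ => ?_⟩
  obtain ⟨n, hn⟩ := (h (ρ 1) (h0 ▸ hρ 0)).2 (fun t => ρ (1 + t)) rfl (hρ.shift 1)
  exact ⟨1 + n, hn⟩

section Layers

open Function

variable {ι : Type} [LinearOrder ι] {S A : ι → Set V}

theorem mem_diff_biUnion_of_notMem_iUnion {v : V} (hv : v ∉ ⋃ k, A k) (k : ι) :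
    v ∈ Set.univ \ ⋃ j < k, A j := by
  simp_all

theorem pairwise_disjoint_of_subset_diff (hA : ∀ k, A k ⊆ Set.univ \ ⋃ j < k, A j) :
    Pairwise (Disjoint on A) :=
  (pairwise_disjoint_on A).2 fun _ _ hjk =>
    Set.disjoint_left.2 fun _ hj hk => (hA _ hk).2 (Set.mem_biUnion hjk hj)

theorem iUnion_subset_attrV_iUnion [WellFoundedLT ι]
    (hA : ∀ k, A k ⊆ attrV E (Set.univ \ ⋃ j < k, A j) (S k)) :
    ⋃ k, A k ⊆ attrV E Set.univ (⋃ k, S k) := by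
  suffices h : ∀ k, ∀ v ∈ A k, ∀ ρ : ℕ → V, ρ 0 = v → IsPath E ρ → ∃ n, ρ n ∈ ⋃ k, S k from
    Set.iUnion_subset fun k v hv =>
      ⟨trivial, fun ρ h0 hρ => h k v hv ρ h0 (isPath_restr_univ.1 hρ)⟩
  intro k
  induction k using WellFoundedLT.induction with
  | _ k ih =>
  intro v hv ρ h0 hρ
  by_cases hstay : ∀ n, ρ n ∈ Set.univ \ ⋃ j < k, A j
  · obtain ⟨n, hn⟩ := (hA k hv).2 ρ h0 (isPath_restr_iff.2 ⟨hρ, hstay⟩)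
    exact ⟨n, Set.mem_iUnion.2 ⟨k, hn⟩⟩
  · push Not at hstay
    obtain ⟨m, hm⟩ := hstay
    obtain ⟨j, hjk, hj⟩ : ∃ j < k, ρ m ∈ A j := by simpa using hm
    obtain ⟨n, hn⟩ := ih j hjk (ρ m) hj (fun t => ρ (m + t)) rfl (hρ.shift m)
    exact ⟨m + n, hn⟩

theorem exists_succ_notMem_iUnion_of_notMem (hsucc : ∀ v : V, ∃ w, (v, w) ∈ E)
    (hfin : ∀ v : V, {w | (v, w) ∈ E}.Finite)
    (hA : ∀ k, A k = attrV E (Set.univ \ ⋃ j < k, A j) (S k))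
    {v : V} (hv : v ∉ ⋃ k, A k) : ∃ w, (v, w) ∈ E ∧ w ∉ ⋃ k, A k := by
  by_contra! hall
  obtain ⟨w₀, hw₀⟩ := hsucc v
  have : Nonempty ι := ⟨(Set.mem_iUnion.1 (hall w₀ hw₀)).choose⟩
  choose! layer hlayer using fun w hw => Set.mem_iUnion.1 (hall w hw)
  obtain ⟨w₁, -, hmax⟩ := Set.exists_max_image _ layer (hfin v) ⟨w₀, hw₀⟩
  set m := layer w₁
  have hvA : v ∈ A m := by
    rw [hA m]
    refine mem_attrV_of_forall_succ (mem_diff_biUnion_of_notMem_iUnion hv m) fun w hw => ?_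
    have hnlt : ¬ layer w < m := fun hlt =>
      hw.2.2.2 (Set.mem_biUnion hlt (hlayer w hw.1))
    rw [← hA m, ← (hmax w hw.1).antisymm (not_lt.1 hnlt)]
    exact hlayer w hw.1
  exact hv (Set.mem_iUnion.2 ⟨m, hvA⟩)

theorem attrV_iUnion_subset_iUnion (hsucc : ∀ v : V, ∃ w, (v, w) ∈ E)
    (hfin : ∀ v : V, {w | (v, w) ∈ E}.Finite)
    (hA : ∀ k, A k = attrV E (Set.univ \ ⋃ j < k, A j) (S k)) :
    attrV E Set.univ (⋃ k, S k) ⊆ ⋃ k, A k := by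
  intro v hv
  by_contra hvA
  obtain ⟨ρ, h0, hρ, hρA⟩ := exists_isPath_of_forall_exists_succ
    (fun _ => exists_succ_notMem_iUnion_of_notMem hsucc hfin hA) hvA
  obtain ⟨n, hn⟩ := hv.2 ρ h0 (isPath_restr_univ.2 hρ)
  obtain ⟨k, hk⟩ := Set.mem_iUnion.1 hn
  exact hρA n (Set.mem_iUnion.2
    ⟨k, hA k ▸ mem_attrV_of_mem (mem_diff_biUnion_of_notMem_iUnion (hρA n) k) hk⟩)

end Layers

end PGraph

open PGraph in
theorem attr_disjoint_union_general {V : Type} (E : Set (V × V))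
    (hsucc : ∀ v : V, ∃ w, (v, w) ∈ E)
    (hfin : ∀ v : V, {w | (v, w) ∈ E}.Finite)
    (ι : Type) (lt : ι → ι → Prop) (hwo : IsWellOrder ι lt)
    (S : ι → Set V)
    (A : ι → Set V)
    (hA : ∀ k, A k = attrV E (Set.univ \ ⋃ j ∈ {j | lt j k}, A j) (S k)) :
    attrV E Set.univ (⋃ k, S k) = ⋃ k, A k ∧ (∀ i j, i ≠ j → Disjoint (A i) (A j)) := by
  classical
  let : LinearOrder ι := linearOrderOfSTO lt
  have : WellFoundedLT ι := hwo.toIsWellFounded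
  exact ⟨(attrV_iUnion_subset_iUnion hsucc hfin hA).antisymm
      (iUnion_subset_attrV_iUnion fun k => (hA k).le),
    pairwise_disjoint_of_subset_diff fun k => (hA k).trans_le (attrV_subset _ _)⟩

open PGraph in
/-- for a finitely-branching parity graph and pairwise disjoint sets
(S_k)_{k<κ} indexed by a well-order, defining A_k = attr(S_k, G|_{V \ union of earlier A's})
by transfinite recursion, the attractor of the union of the S_k is the disjoint union of
the A_k. -/
theorem attr_disjoint_union {V : Type} [Countable V] (E : Set (V × V))
    (hsucc : ∀ v : V, ∃ w, (v, w) ∈ E)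
    (hfin : ∀ v : V, {w | (v, w) ∈ E}.Finite)
    (ι : Type) (lt : ι → ι → Prop) (hwo : IsWellOrder ι lt)
    (S : ι → Set V) (hdisj : ∀ i j, i ≠ j → Disjoint (S i) (S j))
    (A : ι → Set V)
    (hA : ∀ k, A k = attrV E (Set.univ \ ⋃ j ∈ {j | lt j k}, A j) (S k)) :
    attrV E Set.univ (⋃ k, S k) = ⋃ k, A k ∧ (∀ i j, i ≠ j → Disjoint (A i) (A j)) :=
  attr_disjoint_union_general E hsucc hfin ι lt hwo S A hA
end

section
/- Let G be a finitely-branching graph without terminal vertices, v a vertex, and (S_k)_{k<κ} an infinite family of pairwise disjoint nonempty subsets of vertices such that v ∈ attr(∪_k S_k, G). Then there is a finite subfamily S of the S_k with v ∈ attr(∪_{S∈S} S, G). Equivalently, by König's lemma, if v is in the attractor of an infinite disjoint union, it is already in the attractor of a finite sub-union. -/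
open PGraph in
/-- in a finitely-branching graph without terminal vertices, if a vertex v is
in the attractor of an infinite disjoint union of nonempty sets, then it is already in the
attractor of a finite sub-union (Koenig's lemma). -/
theorem attr_of_infinite_union_finite_subfamily {V : Type} [Countable V] (E : Set (V × V))
    (hsucc : ∀ v : V, ∃ w, (v, w) ∈ E)
    (hfin : ∀ v : V, {w | (v, w) ∈ E}.Finite)
    (ι : Type) [Infinite ι] (S : ι → Set V)
    (hdisj : ∀ i j, i ≠ j → Disjoint (S i) (S j))
    (hne : ∀ i, (S i).Nonempty)
    (v : V) (hv : v ∈ attrV E Set.univ (⋃ i, S i)) :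
    ∃ F : Finset ι, v ∈ attrV E Set.univ (⋃ i ∈ F, S i) := by
  classical
  set U : Set V := ⋃ i, S i with hU
  -- A w n : there is a path of length n from w avoiding U entirely
  set A : V → ℕ → Prop := fun w n =>
    ∃ f : ℕ → V, f 0 = w ∧ (∀ k < n, (f k, f (k+1)) ∈ E) ∧ ∀ k ≤ n, f k ∉ U with hA
  have Amono : ∀ w m n, m ≤ n → A w n → A w m := by
    rintro w m n hmn ⟨f, h0, he, hn⟩
    exact ⟨f, h0, fun k hk => he k (lt_of_lt_of_le hk hmn),
      fun k hk => hn k (le_trans hk hmn)⟩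
  have step : ∀ w, (∀ n, A w n) → ∃ w', (w, w') ∈ E ∧ ∀ n, A w' n := by
    intro w hw
    by_contra hc
    push_neg at hc
    set N : ℕ := (hfin w).toFinset.sup
      (fun w' => if h : ∃ n, ¬ A w' n then Nat.find h else 0) with hNdef
    obtain ⟨f, h0, he, hn⟩ := hw (N + 1)
    have hedge : (w, f 1) ∈ E := by
      have := he 0 (by omega); rwa [h0] at this
    have hmem : f 1 ∈ (hfin w).toFinset := by
      simpa using hedge
    have hex : ∃ n, ¬ A (f 1) n := hc (f 1) hedge
    have hle : Nat.find hex ≤ N := by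
      have := Finset.le_sup (f := fun w' => if h : ∃ n, ¬ A w' n then Nat.find h else 0) hmem
      simp only [dif_pos hex] at this
      exact this
    have hAN : A (f 1) N :=
      ⟨fun k => f (k + 1), rfl, fun k hk => he (k + 1) (by omega),
        fun k hk => hn (k + 1) (by omega)⟩
    exact Nat.find_spec hex (Amono _ _ _ hle hAN)
  -- not all lengths are avoidable from v
  have hNG : ¬ ∀ n, A v n := by
    intro hG
    choose nxt h1 h2 using step
    let g : ℕ → {w : V // ∀ n, A w n} :=
      fun n => n.rec ⟨v, hG⟩ (fun _ p => ⟨nxt p.1 p.2, h2 p.1 p.2⟩)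
    have hpath : IsPath (restr E Set.univ) (fun n => (g n).1) := by
      intro n
      refine ⟨h1 (g n).1 (g n).2, by simp⟩
    obtain ⟨n, hn⟩ := hv.2 (fun n => (g n).1) rfl hpath
    obtain ⟨f, h0, -, hfn⟩ := (g n).2 0
    exact hfn 0 le_rfl (h0 ▸ hn)
  push_neg at hNG
  obtain ⟨N, hN⟩ := hNG
  -- reachable sets
  set R : ℕ → Set V := fun n => n.rec {v} (fun _ Rn => ⋃ w ∈ Rn, {w' | (w, w') ∈ E})
    with hR
  have hRfin : ∀ n, (R n).Finite := by
    intro n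
    induction n with
    | zero => exact Set.finite_singleton v
    | succ n ih => exact Set.Finite.biUnion ih (fun w _ => hfin w)
  have hBfin : ((⋃ k ∈ Finset.range (N + 1), R k) ∩ U).Finite :=
    Set.Finite.inter_of_left (Set.Finite.biUnion (Finset.range (N + 1)).finite_toSet
      (fun k _ => hRfin k)) U
  have : Nonempty ι := inferInstance
  set idx : V → ι := fun w => if h : ∃ i, w ∈ S i then h.choose else Classical.arbitrary ι
    with hidx
  refine ⟨hBfin.toFinset.image idx, trivial, ?_⟩
  intro ρ h0 hpath
  have hρE : ∀ k, (ρ k, ρ (k + 1)) ∈ E := fun k => (hpath k).1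
  obtain ⟨k, hkN, hkU⟩ : ∃ k ≤ N, ρ k ∈ U := by
    by_contra hcon
    push_neg at hcon
    exact hN ⟨ρ, h0, fun k _ => hρE k, hcon⟩
  have hmemR : ∀ m, ρ m ∈ R m := by
    intro m
    induction m with
    | zero => simp [hR, h0]
    | succ m ih =>
      exact Set.mem_biUnion ih (hρE m)
  have hmemB : ρ k ∈ hBfin.toFinset := by
    rw [Set.Finite.mem_toFinset]
    exact ⟨Set.mem_biUnion (Finset.mem_coe.mpr (Finset.mem_range.mpr (by omega))) (hmemR k), hkU⟩
  obtain ⟨i, hi⟩ := Set.mem_iUnion.mp hkU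
  refine ⟨k, Set.mem_iUnion₂.mpr ⟨idx (ρ k), Finset.mem_image_of_mem idx hmemB, ?_⟩⟩
  have hex : ∃ i, ρ k ∈ S i := ⟨i, hi⟩
  simp only [hidx, dif_pos hex]
  exact hex.choose_spec
end

section
/- If a play of the transduction game Reg_{J,n}(G) follows an infinite path of the parity graph G whose maximal infinitely-recurring priority is odd, then regardless of Eve's register and priority choices, the resulting output sequence is parity rejecting (or Eve loses instantly). Hence if G is not even, Adam wins Reg_{J,n}(G) for all J and n. -/
/-- A configuration of the registers and counters in the priority transduction game:
`r j` is the content of register `j`, `c (i, j)` is the value of counter `c_{i,j}`. -/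
structure RState where
  r : ℕ → ℕ
  c : ℕ × ℕ → ℕ

namespace RState

/-- `validReg jlo jhi j` : in the transduction game with output index `J = [jlo, jhi]`,
`r j` is one of the available registers (`r 0` is available iff `1 ∈ J`, and `r j` for
`j > 0` is available iff `2j ∈ J`). -/
def validReg (jlo jhi : ℕ) (j : ℕ) : Prop :=
  (j = 0 ∧ jlo = 1) ∨ (0 < j ∧ jlo ≤ 2 * j ∧ 2 * j ≤ jhi)

/-- The output produced when Eve picks register `j` in state `s` (counter bound `n`):
`1` if `j = 0`; `2j` if the register content is even; if it is odd, `2j+1` when the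
counter `c_{r j, j}` has reached `n`, and `2j` otherwise. -/
def output (n : ℕ) (s : RState) (j : ℕ) : ℕ :=
  if j = 0 then 1
  else if Even (s.r j) then 2 * j
  else if s.c (s.r j, j) = n then 2 * j + 1
  else 2 * j

/-- Eve loses instantly when picking register `j`: its content is odd, the counter has
reached `n` so the output would be `2j+1`, but `2j+1` is not in `J = [jlo, jhi]`. -/
def instantLoss (jlo jhi n : ℕ) (s : RState) (j : ℕ) : Prop :=
  j ≠ 0 ∧ ¬ Even (s.r j) ∧ s.c (s.r j, j) = n ∧ ¬ (jlo ≤ 2 * j + 1 ∧ 2 * j + 1 ≤ jhi)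

/-- The state update of the transduction game when Eve picks register `j` and then the
priority `i` (counter bound `n`): first the counter `c_{r j, j}` is incremented, or reset
if it reached `n` (when `r j` is odd and `j` is not `0`); then the counters `c_{i', j}`
for `i' < i` and `c_{r j, j'}` for `j' < j` are reset, the register `r j` is set to `i`,
and every register `r j'` with `j' > j` is updated to `max i (r j')`. -/
def next (n : ℕ) (s : RState) (j i : ℕ) : RState :=
  let c1 : ℕ × ℕ → ℕ := fun p =>
    if p = (s.r j, j) ∧ j ≠ 0 ∧ ¬ Even (s.r j) then
      (if s.c p = n then 0 else s.c p + 1)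
    else s.c p
  { r := fun j' => if j' = j then i else if j < j' then max i (s.r j') else s.r j',
    c := fun p => if (p.2 = j ∧ p.1 < i) ∨ (p.2 < j ∧ p.1 = s.r j) then 0 else c1 p }

/-- The trajectory of the register/counter configuration along a play, given the sequences
of Eve's register choices and priority choices. -/
def traj (n : ℕ) (init : RState) (jch ich : ℕ → ℕ) : ℕ → RState
  | 0 => init
  | l + 1 => next n (traj n init jch ich l) (jch l) (ich l)

/-- The initial configuration: all counters 0, all registers holding `me`
(the maximal even priority of the input index). -/
def initState (me : ℕ) : RState := ⟨fun _ => me, fun _ => 0⟩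

end RState

/-- A sequence of priorities is parity accepting if its limsup is even. -/
def ParityAccepting (c : ℕ → ℕ) : Prop :=
  ∃ p, Even p ∧ (∃ᶠ n in Filter.atTop, c n = p) ∧ (∀ᶠ n in Filter.atTop, c n ≤ p)


private lemma next_r (n : ℕ) (s : RState) (j i j' : ℕ) :
    (RState.next n s j i).r j' =
      if j' = j then i else if j < j' then max i (s.r j') else s.r j' := rfl

private lemma next_c' (n : ℕ) (s : RState) (j i a b : ℕ) :
    (RState.next n s j i).c (a, b) =
      if (b = j ∧ a < i) ∨ (b < j ∧ a = s.r j) then 0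
      else if (a, b) = (s.r j, j) ∧ j ≠ 0 ∧ ¬ Even (s.r j) then
        (if s.c (a, b) = n then 0 else s.c (a, b) + 1)
      else s.c (a, b) := rfl

open Filter in
private lemma nat_limsup_exists {N : ℕ} {f : ℕ → ℕ} (hf : ∀ l, f l ≤ N) :
    ∃ v, (∃ᶠ l in atTop, f l = v) ∧ (∀ᶠ l in atTop, f l ≤ v) := by
  classical
  have hne : ∃ v, v ≤ N ∧ ∃ᶠ l in atTop, f l = v := by
    by_contra h
    push_neg at h
    have h' : ∀ v ∈ Finset.range (N + 1), ∀ᶠ l in atTop, f l ≠ v := by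
      intro v hv
      have := h v (Nat.lt_succ_iff.mp (Finset.mem_range.mp hv))
      simpa [Filter.not_frequently] using this
    have h'' : ∀ᶠ l in atTop, ∀ v ∈ Finset.range (N + 1), f l ≠ v :=
      (Filter.eventually_all_finset _).mpr h'
    obtain ⟨l, hl⟩ := h''.exists
    exact hl (f l) (Finset.mem_range.mpr (Nat.lt_succ_of_le (hf l))) rfl
  obtain ⟨v0, hv0N, hv0⟩ := hne
  have hP : ∃ᶠ l in atTop, f l = Nat.findGreatest (fun v => ∃ᶠ l in atTop, f l = v) N :=
    Nat.findGreatest_spec (P := fun v => ∃ᶠ l in atTop, f l = v) hv0N hv0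
  refine ⟨Nat.findGreatest (fun v => ∃ᶠ l in atTop, f l = v) N, hP, ?_⟩
  have h' : ∀ w ∈ Finset.Icc (Nat.findGreatest (fun v => ∃ᶠ l in atTop, f l = v) N + 1) N,
      ∀ᶠ l in atTop, f l ≠ w := by
    intro w hw
    obtain ⟨hw1, hw2⟩ := Finset.mem_Icc.mp hw
    have hnw : ¬ ∃ᶠ l in atTop, f l = w :=
      Nat.findGreatest_is_greatest (P := fun v => ∃ᶠ l in atTop, f l = v) (by omega) hw2
    simpa [Filter.not_frequently] using hnw
  have h'' := (Filter.eventually_all_finset _).mpr h'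
  refine h''.mono ?_
  intro l hl
  by_contra hgt
  exact hl (f l) (Finset.mem_Icc.mpr ⟨by omega, hf l⟩) rfl

open RState in
/-- if a play of the transduction game follows an infinite path of the parity
graph whose label sequence is parity rejecting (i.e. its maximal infinitely-recurring
priority is odd), then whatever Eve's register and priority choices, either she loses
instantly or the output sequence is parity rejecting.  (Hence if G is not even, Adam wins
the transduction game by following such a path.) -/
theorem adam_wins_on_rejecting_path
    (N n jlo jhi : ℕ) (hjlo : jlo = 1 ∨ jlo = 2)
    (me : ℕ) (hme : Even me ∧ me ≤ N ∧ N ≤ me + 1)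
    -- the labels along the infinite path chosen by Adam, with rejecting label sequence
    (p : ℕ → ℕ) (hp : ∀ l, p l ≤ N) (hrej : ¬ ParityAccepting p)
    -- Eve's register choices and priority choices (choice ♯)
    (jch ich : ℕ → ℕ)
    (hjch : ∀ l, validReg jlo jhi (jch l))
    (hich : ∀ l, (Even (p l) → ich l = p l) ∧
      (¬ Even (p l) → ¬ Even (ich l) ∧ p l ≤ ich l ∧ ich l ≤ N)) :
    (∃ l, instantLoss jlo jhi n (traj n (initState me) jch ich l) (jch l)) ∨
      ¬ ParityAccepting (fun l => output n (traj n (initState me) jch ich l) (jch l)) := by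
  classical
  right
  set s : ℕ → RState := traj n (initState me) jch ich with hsdef
  intro hacc
  obtain ⟨p0, hp0even, hp0freq, hp0ev⟩ := hacc
  have hssucc : ∀ l, s (l + 1) = next n (s l) (jch l) (ich l) := by
    intro l; rw [hsdef]; rfl
  -- translate the filter statements
  have hfreqO : ∀ a, ∃ b, a ≤ b ∧ output n (s b) (jch b) = p0 := by
    intro a
    obtain ⟨b, hb1, hb2⟩ := Filter.frequently_atTop.mp hp0freq a
    exact ⟨b, hb1, hb2⟩
  obtain ⟨T0, hT0'⟩ := Filter.eventually_atTop.mp hp0ev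
  have hT0 : ∀ b, T0 ≤ b → output n (s b) (jch b) ≤ p0 := fun b hb => hT0' b hb
  -- the limsup of Eve's priority choices
  have hichN : ∀ l, ich l ≤ N := by
    intro l
    by_cases h : Even (p l)
    · rw [(hich l).1 h]; exact hp l
    · exact ((hich l).2 h).2.2
  have hpich : ∀ l, p l ≤ ich l := by
    intro l
    by_cases h : Even (p l)
    · rw [(hich l).1 h]
    · exact ((hich l).2 h).2.1
  obtain ⟨iS, hiSfreq, hiSev⟩ := nat_limsup_exists hichN
  have hiSodd : ¬ Even iS := by
    intro hEv
    apply hrej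
    refine ⟨iS, hEv, ?_, ?_⟩
    · refine hiSfreq.mono ?_
      intro l hl
      by_cases h : Even (p l)
      · rw [← (hich l).1 h]; exact hl
      · exact absurd (show Even (ich l) by rw [hl]; exact hEv) ((hich l).2 h).1
    · exact hiSev.mono fun l hl => le_trans (hpich l) hl
  have hfreqI : ∀ a, ∃ b, a ≤ b ∧ ich b = iS := by
    intro a
    obtain ⟨b, hb1, hb2⟩ := Filter.frequently_atTop.mp hiSfreq a
    exact ⟨b, hb1, hb2⟩
  obtain ⟨TI, hTI⟩ := Filter.eventually_atTop.mp hiSev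
  -- structure of outputs equal to p0
  have hp0pos : ∀ l, output n (s l) (jch l) = p0 → jch l ≠ 0 ∧ p0 = 2 * jch l := by
    intro l hl
    obtain ⟨k, hk⟩ := hp0even
    unfold output at hl
    by_cases h0 : jch l = 0
    · rw [if_pos h0] at hl; omega
    · rw [if_neg h0] at hl
      refine ⟨h0, ?_⟩
      split_ifs at hl <;> omega
  obtain ⟨l0, hl0ge, hl0⟩ := hfreqO 0
  obtain ⟨h0ne, h0eq⟩ := hp0pos l0 hl0
  set jS := jch l0 with hjSdef
  have hjSpos : 1 ≤ jS := Nat.pos_of_ne_zero h0ne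
  have houtge : ∀ l, jch l ≠ 0 → 2 * jch l ≤ output n (s l) (jch l) := by
    intro l h0
    unfold output
    rw [if_neg h0]
    split_ifs <;> omega
  set T := max T0 TI with hTdef
  have hT0T : T0 ≤ T := le_max_left _ _
  have hTIT : TI ≤ T := le_max_right _ _
  have hjle : ∀ l, T ≤ l → jch l ≤ jS := by
    intro l hl
    by_cases h0 : jch l = 0
    · omega
    · have h1 := houtge l h0
      have h2 := hT0 l (by omega)
      omega
  -- counters are bounded by n
  have hcle : ∀ l q, (s l).c q ≤ n := by
    intro l
    induction l with
    | zero =>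
      intro q
      rw [hsdef]
      simp [RState.traj, RState.initState]
    | succ l ih =>
      intro q
      obtain ⟨a, b⟩ := q
      rw [hssucc l, next_c']
      have := ih (a, b)
      split_ifs <;> omega
  -- a time T1 ≥ T where Eve outputs p0 (hence picks jS)
  obtain ⟨T1, hT1ge, hT1eq⟩ := hfreqO T
  have hjchT1 : jch T1 = jS := by
    have := (hp0pos T1 hT1eq).2; omega
  -- after T1, register jS stays ≤ iS
  have hrle : ∀ l, T1 + 1 ≤ l → (s l).r jS ≤ iS := by
    intro l hl
    induction l, hl using Nat.le_induction with
    | base =>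
      rw [hssucc, next_r, if_pos hjchT1.symm]
      exact hTI T1 (by omega)
    | succ m hm ih =>
      have hj : jch m ≤ jS := hjle m (by omega)
      have hi : ich m ≤ iS := hTI m (by omega)
      rw [hssucc, next_r]
      split_ifs with h1 h2
      · exact hi
      · exact max_le hi ih
      · exact ih
  -- after an occurrence of iS, register jS is pinned at iS until jS is picked
  have hrpin : ∀ l1, T1 + 1 ≤ l1 → ich l1 = iS →
      ∀ m, l1 + 1 ≤ m → (∀ k, l1 < k → k < m → jch k ≠ jS) → (s m).r jS = iS := by
    intro l1 hl1 hichl1 m hm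
    induction m, hm using Nat.le_induction with
    | base =>
      intro _
      have hj : jch l1 ≤ jS := hjle l1 (by omega)
      have hrl : (s l1).r jS ≤ iS := hrle l1 hl1
      rw [hssucc, next_r]
      split_ifs with h1 h2
      · rw [hichl1]
      · rw [hichl1]; exact max_eq_left hrl
      · omega
    | succ m hm ih =>
      intro hnoj
      have hihm : (s m).r jS = iS := ih (fun k h1 h2 => hnoj k h1 (by omega))
      have hjm : jch m ≤ jS := hjle m (by omega)
      have hjm' : jch m ≠ jS := hnoj m (by omega) (by omega)
      have him : ich m ≤ iS := hTI m (by omega)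
      rw [hssucc, next_r]
      split_ifs with h1 h2
      · omega
      · rw [hihm]; exact max_eq_right him
      · omega
  -- the counter c (iS, jS) is nondecreasing after T
  have hmono : ∀ l, T ≤ l → (s l).c (iS, jS) ≤ (s (l + 1)).c (iS, jS) := by
    intro l hl
    have hjm : jch l ≤ jS := hjle l hl
    have him : ich l ≤ iS := hTI l (by omega)
    rw [hssucc, next_c']
    rw [if_neg (by rintro (⟨h1, h2⟩ | ⟨h1, h2⟩) <;> omega)]
    by_cases hc2 : (iS, jS) = ((s l).r (jch l), jch l) ∧ jch l ≠ 0 ∧ ¬ Even ((s l).r (jch l))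
    · rw [if_pos hc2]
      have hpair := hc2.1
      rw [Prod.mk.injEq] at hpair
      obtain ⟨hpa, hpb⟩ := hpair
      by_cases hcn : (s l).c (iS, jS) = n
      · exfalso
        have hout : output n (s l) (jch l) = 2 * jch l + 1 := by
          unfold output
          rw [if_neg hc2.2.1, if_neg (by rw [← hpa]; exact hiSodd),
            if_pos (by rw [← hpa, ← hpb]; exact hcn)]
        have := hT0 l (by omega)
        omega
      · rw [if_neg hcn]; omega
    · rw [if_neg hc2]
  have hchain : ∀ a b, T ≤ a → a ≤ b → (s a).c (iS, jS) ≤ (s b).c (iS, jS) := by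
    intro a b ha hab
    induction b, hab using Nat.le_induction with
    | base => exact le_rfl
    | succ m hm ih => exact le_trans ih (hmono m (by omega))
  -- the key step: the counter strictly increases after any time ≥ T1 + 1
  have hkey : ∀ a, T1 + 1 ≤ a → ∃ m, a + 1 ≤ m ∧ (s a).c (iS, jS) + 1 ≤ (s m).c (iS, jS) := by
    intro a ha
    obtain ⟨l1, hl1a, hl1i⟩ := hfreqI a
    have hex : ∃ k, l1 + 1 ≤ k ∧ output n (s k) (jch k) = p0 := by
      obtain ⟨b, hb1, hb2⟩ := hfreqO (l1 + 1)
      exact ⟨b, hb1, hb2⟩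
    obtain ⟨hl2a, hl2out⟩ := Nat.find_spec hex
    set l2 := Nat.find hex with hl2def
    have hnoj : ∀ k, l1 < k → k < l2 → jch k ≠ jS := by
      intro k hk1 hk2 hkeq
      have h1 := hT0 k (by omega)
      have h2 : output n (s k) (jch k) = 2 * jch k ∨
          output n (s k) (jch k) = 2 * jch k + 1 := by
        unfold output
        rw [if_neg (show jch k ≠ 0 by omega)]
        split_ifs <;> omega
      exact Nat.find_min hex hk2 ⟨by omega, by rcases h2 with h2 | h2 <;> omega⟩
    have hr2 : (s l2).r jS = iS := hrpin l1 (by omega) hl1i l2 hl2a hnoj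
    have hj2 : jch l2 = jS := by
      have := (hp0pos l2 hl2out).2; omega
    have hcnen : (s l2).c (iS, jS) ≠ n := by
      intro hcn
      have hout : output n (s l2) (jch l2) = 2 * jch l2 + 1 := by
        unfold output
        rw [if_neg (show jch l2 ≠ 0 by omega),
          if_neg (by rw [hj2, hr2]; exact hiSodd),
          if_pos (by rw [hj2, hr2]; exact hcn)]
      omega
    have him2 : ich l2 ≤ iS := hTI l2 (by omega)
    have hstep : (s (l2 + 1)).c (iS, jS) = (s l2).c (iS, jS) + 1 := by
      rw [hssucc, next_c']
      rw [if_neg (by rintro (⟨h1, h2⟩ | ⟨h1, h2⟩) <;> omega)]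
      rw [if_pos ⟨by rw [hj2, hr2], by omega, by rw [hj2, hr2]; exact hiSodd⟩]
      rw [if_neg hcnen]
    have hch := hchain a l2 (by omega) (by omega)
    exact ⟨l2 + 1, by omega, by omega⟩
  -- iterate to exceed the bound n
  have hbig : ∀ k, ∃ m, T1 + 1 ≤ m ∧ k ≤ (s m).c (iS, jS) := by
    intro k
    induction k with
    | zero => exact ⟨T1 + 1, le_rfl, Nat.zero_le _⟩
    | succ k ih =>
      obtain ⟨m, hm1, hm2⟩ := ih
      obtain ⟨m', hm'1, hm'2⟩ := hkey m hm1
      exact ⟨m', by omega, by omega⟩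
  obtain ⟨m, _, hm⟩ := hbig (n + 1)
  have := hcle m (iS, jS)
  omega
end

section
/- Let I = [0,2i] and J = [1,2j] be priority indices, n ≥ 1, and let ρ_I: E → I and ρ_J: E → J be two labellings of the same graph (V,E) such that both labelled graphs are even parity graphs. If ρ_I is n-bound by ρ_J, then Eve wins the transduction game Reg_{J,n+1}(ρ_I) (the transduction game played on the graph labelled by ρ_I, with output range J and counter bound n+1). -/
section Stmt14

variable {V : Type}

/-- An infinite path along an edge set. -/
def IsPath (E : Set (V × V)) (ρ : ℕ → V) : Prop := ∀ l, (ρ l, ρ (l+1)) ∈ E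

/-- A labelled graph is even if the label sequence of every infinite path has even limsup. -/
def EvenG (E : Set (V × V)) (L : V × V → ℕ) : Prop :=
  ∀ ρ : ℕ → V, IsPath E ρ → ParityAccepting (fun l => L (ρ l, ρ (l+1)))

/-- The maximal `L`-label of the segment `[a, b)` of the path `π` equals `p`. -/
def MaxSegLabel (L : V × V → ℕ) (π : ℕ → V) (a b p : ℕ) : Prop :=
  (∀ l, a ≤ l → l < b → L (π l, π (l+1)) ≤ p) ∧ ∃ l, a ≤ l ∧ l < b ∧ L (π l, π (l+1)) = p

/-- `LI` is `n`-bound by `LJ`: there is no finite path segmented into `n+1` consecutive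
nonempty segments such that, for some odd `i` and even `j`, every segment has maximal
`LI`-label `i` and maximal `LJ`-label `j`. -/
def NBound (E : Set (V × V)) (LI LJ : V × V → ℕ) (n : ℕ) : Prop :=
  ¬ ∃ (π : ℕ → V) (t : ℕ → ℕ) (i j : ℕ),
      Odd i ∧ Even j ∧
      (∀ m ≤ n, t m < t (m+1)) ∧
      (∀ l < t (n+1), (π l, π (l+1)) ∈ E) ∧
      (∀ m ≤ n, MaxSegLabel LI π (t m) (t (m+1)) i ∧ MaxSegLabel LJ π (t m) (t (m+1)) j)

/-- The history of the first `l` edges of a play. -/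
def hist (ρ : ℕ → V) (l : ℕ) : List (V × V) :=
  (List.range l).map (fun m => (ρ m, ρ (m+1)))

namespace EveAux

def nu (LI : V × V → ℕ) (j : ℕ) (s : RState) (e : V × V) : ℕ :=
  ((Finset.Icc 1 j).filter fun k => s.r k < LI e).sup id

def pick (LI LJ : V × V → ℕ) (j : ℕ) (s : RState) (e : V × V) : ℕ :=
  max (LJ e / 2) (nu LI j s e)

def step (LI LJ : V × V → ℕ) (j n' : ℕ) (s : RState) (e : V × V) : RState :=
  RState.next n' s (pick LI LJ j s e) (LI e)

def sigj (LI LJ : V × V → ℕ) (i j n' : ℕ) (h : List (V × V)) : ℕ :=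
  match h.getLast? with
  | none => 0
  | some e => pick LI LJ j (h.dropLast.foldl (step LI LJ j n') (RState.initState (2 * i))) e

def sigi (LI : V × V → ℕ) (h : List (V × V)) : ℕ :=
  match h.getLast? with
  | none => 0
  | some e => LI e

def MS (LI LJ : V × V → ℕ) (i j n' : ℕ) (ρ : ℕ → V) : ℕ → RState
  | 0 => RState.initState (2 * i)
  | l + 1 => step LI LJ j n' (MS LI LJ i j n' ρ l) (ρ l, ρ (l + 1))

def Kp (LI LJ : V × V → ℕ) (i j n' : ℕ) (ρ : ℕ → V) (l : ℕ) : ℕ :=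
  pick LI LJ j (MS LI LJ i j n' ρ l) (ρ l, ρ (l + 1))

variable {LI LJ : V × V → ℕ} {i j n' : ℕ} {ρ : ℕ → V}

lemma hist_succ (l : ℕ) : hist ρ (l + 1) = hist ρ l ++ [(ρ l, ρ (l + 1))] := by
  simp [hist, List.range_succ]

lemma machine_eq (l : ℕ) :
    (hist ρ l).foldl (step LI LJ j n') (RState.initState (2 * i)) = MS LI LJ i j n' ρ l := by
  induction l with
  | zero => rfl
  | succ l ih => rw [hist_succ, List.foldl_append, ih]; rfl

lemma sigj_hist (l : ℕ) :
    sigj LI LJ i j n' (hist ρ (l + 1)) = Kp LI LJ i j n' ρ l := by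
  rw [hist_succ]
  unfold sigj
  rw [List.getLast?_concat, List.dropLast_concat, machine_eq]
  rfl

lemma sigi_hist (l : ℕ) : sigi LI (hist ρ (l + 1)) = LI (ρ l, ρ (l + 1)) := by
  rw [hist_succ]
  unfold sigi
  rw [List.getLast?_concat]

lemma traj_eq (l : ℕ) :
    RState.traj n' (RState.initState (2 * i))
      (fun m => sigj LI LJ i j n' (hist ρ (m + 1))) (fun m => sigi LI (hist ρ (m + 1))) l
      = MS LI LJ i j n' ρ l := by
  induction l with
  | zero => rfl
  | succ l ih => rw [RState.traj, ih, sigj_hist, sigi_hist]; rfl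

lemma r_succ (l k : ℕ) :
    (MS LI LJ i j n' ρ (l + 1)).r k =
      if k = Kp LI LJ i j n' ρ l then LI (ρ l, ρ (l + 1))
      else if Kp LI LJ i j n' ρ l < k then max (LI (ρ l, ρ (l + 1))) ((MS LI LJ i j n' ρ l).r k)
      else (MS LI LJ i j n' ρ l).r k := rfl

lemma c_succ (l z k : ℕ) :
    (MS LI LJ i j n' ρ (l + 1)).c (z, k) =
      if (k = Kp LI LJ i j n' ρ l ∧ z < LI (ρ l, ρ (l + 1))) ∨
         (k < Kp LI LJ i j n' ρ l ∧ z = (MS LI LJ i j n' ρ l).r (Kp LI LJ i j n' ρ l)) then 0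
      else if (z, k) = ((MS LI LJ i j n' ρ l).r (Kp LI LJ i j n' ρ l), Kp LI LJ i j n' ρ l) ∧
              Kp LI LJ i j n' ρ l ≠ 0 ∧ ¬ Even ((MS LI LJ i j n' ρ l).r (Kp LI LJ i j n' ρ l)) then
        (if (MS LI LJ i j n' ρ l).c (z, k) = n' then 0 else (MS LI LJ i j n' ρ l).c (z, k) + 1)
      else (MS LI LJ i j n' ρ l).c (z, k) := rfl

end EveAux

namespace EveAux

variable {LI LJ : V × V → ℕ} {i j n' : ℕ} {ρ : ℕ → V} {E : Set (V × V)}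

lemma nu_le {s : RState} {e : V × V} : nu LI j s e ≤ j := by
  refine Finset.sup_le fun k hk => ?_
  have := (Finset.mem_filter.1 hk).1
  exact (Finset.mem_Icc.1 this).2

lemma le_nu {s : RState} {e : V × V} {k : ℕ} (h1 : 1 ≤ k) (h2 : k ≤ j)
    (h : s.r k < LI e) : k ≤ nu LI j s e :=
  Finset.le_sup (f := id) (Finset.mem_filter.2 ⟨Finset.mem_Icc.2 ⟨h1, h2⟩, h⟩)

lemma nu_mem {s : RState} {e : V × V} (h : 1 ≤ nu LI j s e) :
    s.r (nu LI j s e) < LI e := by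
  have hne : ((Finset.Icc 1 j).filter fun k => s.r k < LI e).Nonempty := by
    by_contra hne
    unfold nu at h
    rw [Finset.not_nonempty_iff_eq_empty.1 hne] at h
    simp at h
  obtain ⟨b, hb, hbe⟩ := Finset.exists_mem_eq_sup _ hne id
  have : nu LI j s e = b := hbe
  rw [this]
  exact (Finset.mem_filter.1 hb).2

lemma MS_r_le (hρ : IsPath E ρ) (hLI : ∀ e ∈ E, LI e ≤ 2 * i) (l k : ℕ) :
    (MS LI LJ i j n' ρ l).r k ≤ 2 * i := by
  induction l with
  | zero => exact le_rfl
  | succ l ih =>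
    rw [r_succ]
    have hx : LI (ρ l, ρ (l + 1)) ≤ 2 * i := hLI _ (hρ l)
    split_ifs <;> simp [ih, hx]

lemma Kp_le (hρ : IsPath E ρ) (hLJ : ∀ e ∈ E, 1 ≤ LJ e ∧ LJ e ≤ 2 * j) (l : ℕ) :
    Kp LI LJ i j n' ρ l ≤ j := by
  refine max_le ?_ nu_le
  have := (hLJ _ (hρ l)).2
  omega

end EveAux

namespace EveAux

variable {LI LJ : V × V → ℕ} {i j n' : ℕ} {ρ : ℕ → V} {E : Set (V × V)}

lemma segLem {p A x va a b : ℕ}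
    (hp1 : 1 ≤ p) (hpj : p ≤ j)
    (H1 : ∀ l, A ≤ l → Kp LI LJ i j n' ρ l ≤ p)
    (H2 : ∀ l, A ≤ l → LJ (ρ l, ρ (l + 1)) ≤ 2 * p)
    (hab : a < b) (hAa : A ≤ a)
    (hKa : Kp LI LJ i j n' ρ a = p)
    (hRa : (MS LI LJ i j n' ρ a).r p = x)
    (hxa : LI (ρ a, ρ (a + 1)) ≤ x)
    (hRb : (MS LI LJ i j n' ρ b).r p = x)
    (hva : 1 ≤ va)
    (hconst : ∀ l, a < l → l ≤ b → (MS LI LJ i j n' ρ l).c (x, p) = va) :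
    (∀ l, a ≤ l → l < b → LI (ρ l, ρ (l + 1)) ≤ x) ∧
    (∃ l, a ≤ l ∧ l < b ∧ LI (ρ l, ρ (l + 1)) = x) ∧
    LJ (ρ a, ρ (a + 1)) = 2 * p := by
  have key : ∀ l, a < l → l < b → (MS LI LJ i j n' ρ l).r p ≤ x → LI (ρ l, ρ (l + 1)) ≤ x := by
    intro l hal hlb hrp
    by_contra hgt
    push_neg at hgt
    have hnu : p ≤ nu LI j (MS LI LJ i j n' ρ l) (ρ l, ρ (l + 1)) :=
      le_nu hp1 hpj (lt_of_le_of_lt hrp hgt)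
    have hKl : Kp LI LJ i j n' ρ l = p :=
      le_antisymm (H1 l (by omega)) (le_trans hnu (le_max_right _ _))
    have hc := hconst (l + 1) (by omega) (by omega)
    rw [c_succ, if_pos (Or.inl ⟨hKl.symm, hgt⟩)] at hc
    omega
  have Q : ∀ l, a + 1 ≤ l → l ≤ b →
      (MS LI LJ i j n' ρ l).r p ≤ x ∧
      ((MS LI LJ i j n' ρ l).r p = x → ∃ m, a ≤ m ∧ m < l ∧ LI (ρ m, ρ (m + 1)) = x) := by
    intro l hl
    induction l, hl using Nat.le_induction with
    | base =>
      intro _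
      rw [r_succ, if_pos hKa.symm]
      exact ⟨hxa, fun hEq => ⟨a, le_rfl, by omega, hEq⟩⟩
    | succ l hl ih =>
      intro hb1
      obtain ⟨ih1, ih2⟩ := ih (by omega)
      have hLl : LI (ρ l, ρ (l + 1)) ≤ x := key l (by omega) (by omega) ih1
      rw [r_succ]
      split_ifs with h1 h2
      · exact ⟨hLl, fun hEq => ⟨l, by omega, by omega, hEq⟩⟩
      · refine ⟨max_le hLl ih1, fun hEq => ?_⟩
        rcases max_choice (LI (ρ l, ρ (l + 1))) ((MS LI LJ i j n' ρ l).r p) with hm | hm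
        · exact ⟨l, by omega, by omega, by rw [hm] at hEq; exact hEq⟩
        · rw [hm] at hEq
          obtain ⟨m, hm1, hm2, hm3⟩ := ih2 hEq
          exact ⟨m, hm1, by omega, hm3⟩
      · refine ⟨ih1, fun hEq => ?_⟩
        obtain ⟨m, hm1, hm2, hm3⟩ := ih2 hEq
        exact ⟨m, hm1, by omega, hm3⟩
  refine ⟨?_, ?_, ?_⟩
  · intro l h1 h2
    rcases eq_or_lt_of_le h1 with rfl | hlt
    · exact hxa
    · exact key l hlt h2 (Q l (by omega) (by omega)).1
  · exact (Q b (by omega) le_rfl).2 hRb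
  · unfold Kp pick at hKa
    rcases le_or_gt (nu LI j (MS LI LJ i j n' ρ a) (ρ a, ρ (a + 1)))
      (LJ (ρ a, ρ (a + 1)) / 2) with hc | hc
    · rw [max_eq_left hc] at hKa
      have h2p := H2 a hAa
      omega
    · rw [max_eq_right (le_of_lt hc)] at hKa
      have hmem := nu_mem (by omega : 1 ≤ nu LI j (MS LI LJ i j n' ρ a) (ρ a, ρ (a + 1)))
      rw [hKa, hRa] at hmem
      omega
end EveAux

namespace EveAux

variable {LI LJ : V × V → ℕ} {i j n' : ℕ} {ρ : ℕ → V} {E : Set (V × V)}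

lemma winStep {p x v b : ℕ} (hv : 1 ≤ v)
    (hb : (MS LI LJ i j n' ρ b).c (x, p) = v) :
    ∃ u, u < b ∧ Kp LI LJ i j n' ρ u = p ∧ (MS LI LJ i j n' ρ u).r p = x ∧ ¬ Even x ∧
      LI (ρ u, ρ (u + 1)) ≤ x ∧ (MS LI LJ i j n' ρ u).c (x, p) = v - 1 ∧
      ∀ l, u < l → l ≤ b → (MS LI LJ i j n' ρ l).c (x, p) = v := by
  classical
  have hb0 : 1 ≤ b := by
    rcases Nat.eq_zero_or_pos b with rfl | h
    · simp [MS, RState.initState] at hb; omega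
    · exact h
  set P : ℕ → Prop := fun l =>
    (MS LI LJ i j n' ρ (l + 1)).c (x, p) ≠ (MS LI LJ i j n' ρ l).c (x, p) with hP
  have hex : ∃ l, l ≤ b - 1 ∧ P l := by
    by_contra hno
    push_neg at hno
    have hall : ∀ m, m ≤ b → (MS LI LJ i j n' ρ m).c (x, p) = 0 := by
      intro m
      induction m with
      | zero => intro _; rfl
      | succ m ih =>
        intro hm
        have heq : (MS LI LJ i j n' ρ (m + 1)).c (x, p) = (MS LI LJ i j n' ρ m).c (x, p) := by
          by_contra hne
          exact hno m (by omega) hne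
        rw [heq]
        exact ih (by omega)
    rw [hall b le_rfl] at hb
    omega
  obtain ⟨l₀, hl₀, hPl₀⟩ := hex
  set u := Nat.findGreatest P (b - 1) with hu
  have hPu : (MS LI LJ i j n' ρ (u + 1)).c (x, p) ≠ (MS LI LJ i j n' ρ u).c (x, p) :=
    Nat.findGreatest_spec hl₀ hPl₀
  have hub : u ≤ b - 1 := Nat.findGreatest_le (b - 1)
  have hconst : ∀ l, u + 1 ≤ l → l ≤ b → (MS LI LJ i j n' ρ l).c (x, p)
      = (MS LI LJ i j n' ρ (u + 1)).c (x, p) := by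
    intro l hl
    induction l, hl using Nat.le_induction with
    | base => intro _; rfl
    | succ l hl ih =>
      intro hb1
      have heq : (MS LI LJ i j n' ρ (l + 1)).c (x, p) = (MS LI LJ i j n' ρ l).c (x, p) := by
        by_contra hne
        exact (Nat.findGreatest_is_greatest (P := P) (n := b - 1) (by omega) (by omega)) hne
      rw [heq]
      exact ih (by omega)
  have hCv : (MS LI LJ i j n' ρ (u + 1)).c (x, p) = v :=
    (hconst b (by omega) le_rfl).symm.trans hb
  have hcv : ∀ l, u < l → l ≤ b → (MS LI LJ i j n' ρ l).c (x, p) = v :=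
    fun l h1 h2 => (hconst l h1 h2).trans hCv
  have hCv' := hCv
  rw [c_succ] at hPu hCv'
  split_ifs at hPu hCv' with h1 h2 h3
  · omega
  · omega
  · obtain ⟨hpair, hK0, hodd⟩ := h2
    obtain ⟨hx1, hp2⟩ := Prod.mk.inj hpair
    rw [← hp2] at hx1 hodd
    have hLIle : LI (ρ u, ρ (u + 1)) ≤ x := by
      by_contra hlt
      exact h1 (Or.inl ⟨hp2, by omega⟩)
    refine ⟨u, by omega, hp2.symm, hx1.symm, by rw [hx1]; exact hodd, hLIle, by omega, hcv⟩
  · simp at hPu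

lemma chain {p x : ℕ} :
    ∀ v, 1 ≤ v → ∀ b, (MS LI LJ i j n' ρ b).c (x, p) = v →
    ∃ u : ℕ → ℕ,
      (∀ m, m < v → Kp LI LJ i j n' ρ (u m) = p ∧ (MS LI LJ i j n' ρ (u m)).r p = x ∧
        LI (ρ (u m), ρ (u m + 1)) ≤ x ∧ (MS LI LJ i j n' ρ (u m)).c (x, p) = m) ∧
      (∀ m, m + 1 < v → u m < u (m + 1)) ∧
      u (v - 1) < b ∧
      (∀ m, m + 1 < v → ∀ l, u m < l → l ≤ u (m + 1) → (MS LI LJ i j n' ρ l).c (x, p) = m + 1) ∧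
      (∀ l, u (v - 1) < l → l ≤ b → (MS LI LJ i j n' ρ l).c (x, p) = v) ∧
      (∀ l, u 0 < l → l ≤ b → 1 ≤ (MS LI LJ i j n' ρ l).c (x, p)) ∧
      ¬ Even x := by
  intro v hv
  induction v, hv using Nat.le_induction with
  | base =>
    intro b hb
    obtain ⟨u₀, hub, hK, hR, hx, hLIle, hC0, hcst⟩ := winStep le_rfl hb
    refine ⟨fun _ => u₀, ?_, by omega, hub, by omega, ?_, ?_, hx⟩
    · intro m hm
      have : m = 0 := by omega
      subst this
      exact ⟨hK, hR, hLIle, by simpa using hC0⟩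
    · intro l h1 h2
      exact hcst l h1 h2
    · intro l h1 h2
      rw [hcst l h1 h2]
  | succ v hv ih =>
    intro b hb
    obtain ⟨u₁, hub, hK, hR, hx, hLIle, hCv, hcst⟩ := winStep (by omega) hb
    have hCv' : (MS LI LJ i j n' ρ u₁).c (x, p) = v := by simpa using hCv
    obtain ⟨u, c1, c2, c3, c4, c5, c6, c7⟩ := ih u₁ hCv'
    refine ⟨fun m => if m < v then u m else u₁, ?_, ?_, ?_, ?_, ?_, ?_, hx⟩
    · intro m hm
      by_cases hmv : m < v
      · simpa [hmv] using c1 m hmv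
      · have : m = v := by omega
        subst this
        simp only [if_neg hmv]
        exact ⟨hK, hR, hLIle, hCv'⟩
    · intro m hm
      have hmv' : m < v := by omega
      by_cases hmv : m + 1 < v
      · simp only [if_pos hmv', if_pos hmv]
        exact c2 m hmv
      · simp only [if_pos hmv', if_neg hmv]
        have := c3
        rw [show v - 1 = m from by omega] at this
        exact this
    · simp only [if_neg (show ¬ (v + 1 - 1 < v) from by omega)]
      exact hub
    · intro m hm l h1 h2
      simp only [if_pos (show m < v from by omega)] at h1
      by_cases hmv : m + 1 < v
      · simp only [if_pos hmv] at h2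
        exact c4 m hmv l h1 h2
      · simp only [if_neg hmv] at h2
        have h1' := h1
        rw [show m = v - 1 from by omega] at h1'
        have := c5 l h1' h2
        omega
    · intro l h1 h2
      simp only [if_neg (show ¬ (v + 1 - 1 < v) from by omega)] at h1
      exact hcst l h1 h2
    · intro l h1 h2
      simp only [if_pos (show 0 < v from by omega)] at h1
      by_cases hl : l ≤ u₁
      · exact c6 l h1 hl
      · rw [hcst l (by omega) h2]
        omega

lemma core {n p A x w : ℕ}
    (hρ : IsPath E ρ) (hbound : NBound E LI LJ n)
    (hp1 : 1 ≤ p) (hpj : p ≤ j)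
    (H1 : ∀ l, A ≤ l → Kp LI LJ i j (n + 1) ρ l ≤ p)
    (H2 : ∀ l, A ≤ l → LJ (ρ l, ρ (l + 1)) ≤ 2 * p)
    (hRw : (MS LI LJ i j (n + 1) ρ w).r p = x)
    (hCw : (MS LI LJ i j (n + 1) ρ w).c (x, p) = n + 1)
    (ha0 : ∃ a0, A ≤ a0 ∧ a0 ≤ w ∧ (MS LI LJ i j (n + 1) ρ a0).c (x, p) = 0) : False := by
  obtain ⟨u, c1, c2, c3, c4, c5, c6, c7⟩ := chain (n + 1) (by omega) w hCw
  obtain ⟨a0, hAa0, ha0w, ha0c⟩ := ha0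
  have hu0 : a0 ≤ u 0 := by
    by_contra h
    push_neg at h
    have := c6 a0 h ha0w
    omega
  have hA0 : A ≤ u 0 := le_trans hAa0 hu0
  set U : ℕ → ℕ := fun m => if m ≤ n then u m else w with hU
  have humono : ∀ a b', a ≤ b' → b' ≤ n → u a ≤ u b' := by
    intro a b' hab
    induction b', hab using Nat.le_induction with
    | base => intro _; exact le_rfl
    | succ b' hab ihb =>
      intro hb'
      have h1 := ihb (by omega)
      have h2 := c2 b' (by omega)
      omega
  have hUmono : ∀ m, m ≤ n → U m < U (m + 1) := by
    intro m hm
    simp only [hU, if_pos hm]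
    by_cases hmn : m + 1 ≤ n
    · simp only [if_pos hmn]
      exact c2 m (by omega)
    · simp only [if_neg hmn]
      have hc3 := c3
      rw [show n + 1 - 1 = n from by omega] at hc3
      have := humono m n hm (le_refl n)
      omega
  have hUmono' : ∀ m m', m ≤ m' → m' ≤ n + 1 → U m ≤ U m' := by
    intro m m' hmm'
    induction m', hmm' using Nat.le_induction with
    | base => intro _; exact le_rfl
    | succ m' hmm' ihm =>
      intro hm'
      have h1 := ihm (by omega)
      have h2 := hUmono m' (by omega)
      omega
  have hAU : ∀ m, m ≤ n + 1 → A ≤ U m := by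
    intro m hm
    have : U 0 ≤ U m := hUmono' 0 m (by omega) hm
    have hU0 : U 0 = u 0 := by simp [hU]
    omega
  have hseg : ∀ m, m ≤ n →
      (∀ l, U m ≤ l → l < U (m + 1) → LI (ρ l, ρ (l + 1)) ≤ x) ∧
      (∃ l, U m ≤ l ∧ l < U (m + 1) ∧ LI (ρ l, ρ (l + 1)) = x) ∧
      LJ (ρ (U m), ρ (U m + 1)) = 2 * p := by
    intro m hm
    obtain ⟨hKm, hRm, hLm, hCm⟩ := c1 m (by omega)
    have hUm : U m = u m := by simp [hU, hm]
    have hRb' : (MS LI LJ i j (n + 1) ρ (U (m + 1))).r p = x := by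
      by_cases hmn : m + 1 ≤ n
      · simp only [hU, if_pos hmn]
        exact (c1 (m + 1) (by omega)).2.1
      · simp only [hU, if_neg hmn]
        exact hRw
    have hconst' : ∀ l, U m < l → l ≤ U (m + 1) → (MS LI LJ i j (n + 1) ρ l).c (x, p) = m + 1 := by
      intro l h1 h2
      rw [hUm] at h1
      by_cases hmn : m + 1 ≤ n
      · simp only [hU, if_pos hmn] at h2
        exact c4 m (by omega) l h1 h2
      · simp only [hU, if_neg hmn] at h2
        have hmn' : m = n := by omega
        subst hmn'
        have h1' := h1
        rw [show m = m + 1 - 1 from by omega] at h1'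
        exact (c5 l h1' h2).trans (by omega)
    have := segLem hp1 hpj H1 H2 (hUmono m hm) (hAU m (by omega))
      (hUm ▸ hKm) (hUm ▸ hRm) (hUm ▸ hLm) hRb' (by omega : 1 ≤ m + 1) hconst'
    exact this
  apply hbound
  refine ⟨fun l => ρ (U 0 + l), fun m => U (min m (n + 1)) - U 0, x, 2 * p,
    Nat.not_even_iff_odd.1 c7, ⟨p, two_mul p⟩, ?_, ?_, ?_⟩
  · intro m hm
    have e1 : min m (n + 1) = m := by omega
    have e2 : min (m + 1) (n + 1) = m + 1 := by omega
    simp only [e1, e2]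
    have h1 := hUmono m hm
    have h2 := hUmono' 0 m (by omega) (by omega)
    omega
  · intro l _
    exact hρ (U 0 + l)
  · intro m hm
    have e1 : min m (n + 1) = m := by omega
    have e2 : min (m + 1) (n + 1) = m + 1 := by omega
    simp only [e1, e2]
    obtain ⟨hs1, hs2, hs3⟩ := hseg m hm
    have hle0 : U 0 ≤ U m := hUmono' 0 m (by omega) (by omega)
    have hlt : U m < U (m + 1) := hUmono m hm
    constructor
    · constructor
      · intro l h1 h2
        exact hs1 (U 0 + l) (by omega) (by omega)
      · obtain ⟨l', hl1, hl2, hl3⟩ := hs2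
        refine ⟨l' - U 0, by omega, by omega, ?_⟩
        have hre : U 0 + (l' - U 0) = l' := by omega
        show LI (ρ (U 0 + (l' - U 0)), ρ (U 0 + (l' - U 0) + 1)) = x
        rw [hre]
        exact hl3
    · constructor
      · intro l h1 h2
        exact H2 (U 0 + l) (by
          have := hAU m (by omega)
          omega)
      · refine ⟨U m - U 0, by omega, by omega, ?_⟩
        have hre : U 0 + (U m - U 0) = U m := by omega
        show LJ (ρ (U 0 + (U m - U 0)), ρ (U 0 + (U m - U 0) + 1)) = 2 * p
        rw [hre]
        exact hs3

lemma noLoss {n : ℕ} (hρ : IsPath E ρ) (hj : 1 ≤ j)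
    (hLJ : ∀ e ∈ E, 1 ≤ LJ e ∧ LJ e ≤ 2 * j)
    (hbound : NBound E LI LJ n) (l : ℕ) :
    ¬ RState.instantLoss 1 (2 * j) (n + 1) (MS LI LJ i j (n + 1) ρ l)
      (Kp LI LJ i j (n + 1) ρ l) := by
  intro hloss
  obtain ⟨hK0, hodd, hC, hrange⟩ := hloss
  have hKle : Kp LI LJ i j (n + 1) ρ l ≤ j := Kp_le hρ hLJ l
  by_cases hKj : Kp LI LJ i j (n + 1) ρ l = j
  · rw [hKj] at hodd hC
    exact core hρ hbound hj le_rfl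
      (fun l _ => Kp_le hρ hLJ l) (fun l _ => (hLJ _ (hρ l)).2)
      rfl hC ⟨0, le_rfl, Nat.zero_le l, rfl⟩
  · exact hrange ⟨by omega, by omega⟩

lemma parity {n : ℕ} (hρ : IsPath E ρ) (hj : 1 ≤ j)
    (hLI : ∀ e ∈ E, LI e ≤ 2 * i)
    (hLJ : ∀ e ∈ E, 1 ≤ LJ e ∧ LJ e ≤ 2 * j)
    (hevenJ : ParityAccepting (fun l => LJ (ρ l, ρ (l + 1))))
    (hbound : NBound E LI LJ n) :
    ParityAccepting (fun l => RState.output (n + 1) (MS LI LJ i j (n + 1) ρ l)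
      (Kp LI LJ i j (n + 1) ρ l)) := by
  classical
  obtain ⟨P, hPe, hPfreq, hPev⟩ := hevenJ
  obtain ⟨l₁, hl₁⟩ := hPfreq.exists
  replace hl₁ : LJ (ρ l₁, ρ (l₁ + 1)) = P := hl₁
  have hP1 : 1 ≤ P := by have := (hLJ _ (hρ l₁)).1; omega
  have hP2j : P ≤ 2 * j := by have := (hLJ _ (hρ l₁)).2; omega
  obtain ⟨p, hp⟩ := hPe
  have hp1 : 1 ≤ p := by omega
  have hpj : p ≤ j := by omega
  have hP2p : P = 2 * p := by omega
  obtain ⟨A0, hA0⟩ := Filter.eventually_atTop.1 hPev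
  -- registers above p eventually stabilize
  have hmonk : ∀ k, p < k → k ≤ j → ∀ l, A0 ≤ l →
      (MS LI LJ i j (n + 1) ρ l).r k ≤ (MS LI LJ i j (n + 1) ρ (l + 1)).r k := by
    intro k hk1 hk2 l hl
    rw [r_succ]
    split_ifs with h1 h2
    · have hy : LJ (ρ l, ρ (l + 1)) ≤ 2 * p := by
        have hthis : LJ (ρ l, ρ (l + 1)) ≤ P := hA0 l hl
        omega
      have hdiv : LJ (ρ l, ρ (l + 1)) / 2 < k := by omega
      have hnuk : nu LI j (MS LI LJ i j (n + 1) ρ l) (ρ l, ρ (l + 1)) = k := by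
        rcases max_choice (LJ (ρ l, ρ (l + 1)) / 2)
          (nu LI j (MS LI LJ i j (n + 1) ρ l) (ρ l, ρ (l + 1))) with hmc | hmc
        · have hKd : Kp LI LJ i j (n + 1) ρ l = LJ (ρ l, ρ (l + 1)) / 2 := hmc
          omega
        · have hKd : Kp LI LJ i j (n + 1) ρ l = nu LI j (MS LI LJ i j (n + 1) ρ l)
            (ρ l, ρ (l + 1)) := hmc
          omega
      have hrk := nu_mem (by omega : 1 ≤ nu LI j (MS LI LJ i j (n + 1) ρ l) (ρ l, ρ (l + 1)))
      rw [hnuk] at hrk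
      omega
    · exact le_max_right _ _
    · exact le_rfl
  have hstab : ∀ k, ∃ A1, A0 ≤ A1 ∧ (p < k → k ≤ j → ∀ l, A1 ≤ l →
      (MS LI LJ i j (n + 1) ρ l).r k = (MS LI LJ i j (n + 1) ρ A1).r k) := by
    intro k
    by_cases hk : p < k ∧ k ≤ j
    · obtain ⟨hk1, hk2⟩ := hk
      have hmono2 : ∀ a b', A0 ≤ a → a ≤ b' →
          (MS LI LJ i j (n + 1) ρ a).r k ≤ (MS LI LJ i j (n + 1) ρ b').r k := by
        intro a b' ha hab
        induction b', hab using Nat.le_induction with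
        | base => exact le_rfl
        | succ b' hab ihb => exact le_trans ihb (hmonk k hk1 hk2 b' (by omega))
      have hbd : ∀ l, (MS LI LJ i j (n + 1) ρ l).r k ≤ 2 * i :=
        fun l => MS_r_le hρ hLI l k
      set Q : ℕ → Prop := fun v => ∃ l, A0 ≤ l ∧ (MS LI LJ i j (n + 1) ρ l).r k = v with hQdef
      have hspec : Q (Nat.findGreatest Q (2 * i)) :=
        Nat.findGreatest_spec (hbd A0) ⟨A0, le_rfl, rfl⟩
      obtain ⟨l0, hl0, hfl0⟩ := hspec
      refine ⟨l0, hl0, fun _ _ l hl => ?_⟩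
      have h1 : (MS LI LJ i j (n + 1) ρ l0).r k ≤ (MS LI LJ i j (n + 1) ρ l).r k :=
        hmono2 l0 l hl0 hl
      have h2 : (MS LI LJ i j (n + 1) ρ l).r k ≤ Nat.findGreatest Q (2 * i) := by
        by_contra hgt
        push_neg at hgt
        exact (Nat.findGreatest_is_greatest (P := Q) (n := 2 * i) hgt (hbd l))
          ⟨l, by omega, rfl⟩
      omega
    · exact ⟨A0, le_rfl, fun h1 h2 => absurd ⟨h1, h2⟩ hk⟩
  choose A1 hA1a hA1b using hstab
  set A := max A0 ((Finset.Icc (p + 1) j).sup A1) with hAdef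
  have hH1 : ∀ l, A ≤ l → Kp LI LJ i j (n + 1) ρ l ≤ p := by
    intro l hl
    by_contra hgt
    push_neg at hgt
    have hkj : Kp LI LJ i j (n + 1) ρ l ≤ j := Kp_le hρ hLJ l
    have hA0l : A0 ≤ l := le_trans (le_max_left _ _) hl
    have hy : LJ (ρ l, ρ (l + 1)) / 2 ≤ p := by
      have hthis : LJ (ρ l, ρ (l + 1)) ≤ P := hA0 l hA0l
      omega
    have hnuk : nu LI j (MS LI LJ i j (n + 1) ρ l) (ρ l, ρ (l + 1))
        = Kp LI LJ i j (n + 1) ρ l := by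
      rcases max_choice (LJ (ρ l, ρ (l + 1)) / 2)
        (nu LI j (MS LI LJ i j (n + 1) ρ l) (ρ l, ρ (l + 1))) with hmc | hmc
      · have hKd : Kp LI LJ i j (n + 1) ρ l = LJ (ρ l, ρ (l + 1)) / 2 := hmc
        omega
      · exact (show Kp LI LJ i j (n + 1) ρ l = nu LI j (MS LI LJ i j (n + 1) ρ l)
          (ρ l, ρ (l + 1)) from hmc).symm
    have hrk := nu_mem (by omega : 1 ≤ nu LI j (MS LI LJ i j (n + 1) ρ l) (ρ l, ρ (l + 1)))
    rw [hnuk] at hrk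
    have hr1 : (MS LI LJ i j (n + 1) ρ (l + 1)).r (Kp LI LJ i j (n + 1) ρ l)
        = LI (ρ l, ρ (l + 1)) := by rw [r_succ, if_pos rfl]
    have hkIcc : Kp LI LJ i j (n + 1) ρ l ∈ Finset.Icc (p + 1) j :=
      Finset.mem_Icc.2 ⟨by omega, hkj⟩
    have hsupA : A1 (Kp LI LJ i j (n + 1) ρ l) ≤ l :=
      le_trans (le_trans (Finset.le_sup hkIcc) (le_max_right A0 _)) hl
    have he1 := hA1b (Kp LI LJ i j (n + 1) ρ l) (by omega) hkj l hsupA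
    have he2 := hA1b (Kp LI LJ i j (n + 1) ρ l) (by omega) hkj (l + 1) (by omega)
    omega
  have hH2 : ∀ l, A ≤ l → LJ (ρ l, ρ (l + 1)) ≤ 2 * p := by
    intro l hl
    have hthis : LJ (ρ l, ρ (l + 1)) ≤ P := hA0 l (le_trans (le_max_left _ _) hl)
    omega
  set O : Set ℕ := {l | A ≤ l ∧ Kp LI LJ i j (n + 1) ρ l = p ∧
    ¬ Even ((MS LI LJ i j (n + 1) ρ l).r p) ∧
    (MS LI LJ i j (n + 1) ρ l).c ((MS LI LJ i j (n + 1) ρ l).r p, p) = n + 1} with hOdef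
  have hkey : ∀ w w', w ∈ O → w' ∈ O → w < w' →
      (MS LI LJ i j (n + 1) ρ w).r p = (MS LI LJ i j (n + 1) ρ w').r p → False := by
    intro w w' hw hw' hww' heq
    obtain ⟨hAw, hKw, how, hCw⟩ := hw
    obtain ⟨hAw', hKw', how', hCw'⟩ := hw'
    refine core hρ hbound hp1 hpj hH1 hH2 rfl hCw' ⟨w + 1, by omega, by omega, ?_⟩
    rw [← heq]
    rw [c_succ, hKw]
    by_cases hcase : (MS LI LJ i j (n + 1) ρ w).r p < LI (ρ w, ρ (w + 1))
    · rw [if_pos (Or.inl ⟨rfl, hcase⟩)]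
    · rw [if_neg (by rintro (⟨_, hlt⟩ | ⟨hlt, _⟩) <;> omega),
        if_pos ⟨rfl, by omega, how⟩, if_pos hCw]
  have hOfin : O.Finite := by
    by_contra hInf
    have hInf' : O.Infinite := hInf
    obtain ⟨a, ha, b, hb, hab, hfab⟩ := hInf'.exists_ne_map_eq_of_mapsTo
      (t := Set.Iic (2 * i)) (fun l _ => Set.mem_Iic.2 (MS_r_le hρ hLI l p))
      (Set.finite_Iic (2 * i))
    rcases lt_or_gt_of_ne hab with h | h
    · exact hkey a b ha hb h hfab
    · exact hkey b a hb ha h hfab.symm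
  obtain ⟨B0, hB0⟩ := hOfin.bddAbove
  have hnoov : ∀ l, max A (B0 + 1) ≤ l → ¬ (Kp LI LJ i j (n + 1) ρ l = p ∧
      ¬ Even ((MS LI LJ i j (n + 1) ρ l).r p) ∧
      (MS LI LJ i j (n + 1) ρ l).c ((MS LI LJ i j (n + 1) ρ l).r p, p) = n + 1) := by
    intro l hl hov
    have hmem : l ∈ O := ⟨by omega, hov.1, hov.2.1, hov.2.2⟩
    have := hB0 hmem
    omega
  refine ⟨2 * p, ⟨p, two_mul p⟩, ?_, ?_⟩
  · rw [Filter.frequently_atTop]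
    intro a
    obtain ⟨b, hba, hbP⟩ := Filter.frequently_atTop.1 hPfreq (max a (max A (B0 + 1)))
    refine ⟨b, by omega, ?_⟩
    have hAb : A ≤ b := by omega
    have hKb : Kp LI LJ i j (n + 1) ρ b = p := by
      have h1 : Kp LI LJ i j (n + 1) ρ b ≤ p := hH1 b hAb
      have h2 : LJ (ρ b, ρ (b + 1)) / 2 ≤ Kp LI LJ i j (n + 1) ρ b := le_max_left _ _
      replace hbP : LJ (ρ b, ρ (b + 1)) = P := hbP
      omega
    show RState.output (n + 1) (MS LI LJ i j (n + 1) ρ b) (Kp LI LJ i j (n + 1) ρ b) = 2 * p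
    unfold RState.output
    rw [hKb, if_neg (by omega : ¬ p = 0)]
    by_cases hev : Even ((MS LI LJ i j (n + 1) ρ b).r p)
    · rw [if_pos hev]
    · rw [if_neg hev]
      have hC : (MS LI LJ i j (n + 1) ρ b).c ((MS LI LJ i j (n + 1) ρ b).r p, p) ≠ n + 1 := by
        intro hC
        exact hnoov b (by omega) ⟨hKb, hev, hC⟩
      rw [if_neg hC]
  · rw [Filter.eventually_atTop]
    refine ⟨max A (B0 + 1), fun b hb => ?_⟩
    have hAb : A ≤ b := by omega
    have hKle : Kp LI LJ i j (n + 1) ρ b ≤ p := hH1 b hAb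
    show RState.output (n + 1) (MS LI LJ i j (n + 1) ρ b) (Kp LI LJ i j (n + 1) ρ b) ≤ 2 * p
    unfold RState.output
    by_cases h0 : Kp LI LJ i j (n + 1) ρ b = 0
    · rw [if_pos h0]; omega
    · rw [if_neg h0]
      by_cases hev : Even ((MS LI LJ i j (n + 1) ρ b).r (Kp LI LJ i j (n + 1) ρ b))
      · rw [if_pos hev]; omega
      · rw [if_neg hev]
        by_cases hC : (MS LI LJ i j (n + 1) ρ b).c
            ((MS LI LJ i j (n + 1) ρ b).r (Kp LI LJ i j (n + 1) ρ b),
              Kp LI LJ i j (n + 1) ρ b) = n + 1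
        · rw [if_pos hC]
          have hne : Kp LI LJ i j (n + 1) ρ b ≠ p := by
            intro he
            rw [he] at hev hC
            exact hnoov b hb ⟨he, hev, hC⟩
          omega
        · rw [if_neg hC]; omega
end EveAux

open RState in
/-- if `ρ_I : E → [0,2i]` and `ρ_J : E → [1,2j]` are two even labellings of the
same graph and `ρ_I` is `n`-bound by `ρ_J` (`n ≥ 1`), then Eve wins the transduction game
`Reg_{J,n+1}` played on the graph labelled by `ρ_I`, with output range `J = [1,2j]` and
counter bound `n+1`: she has a history-based strategy (choosing registers and priorities)
which, along every infinite path of the graph, makes valid choices, never loses instantly,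
and produces a parity accepting output sequence. -/
theorem eve_wins_of_nbound
    (E : Set (V × V)) (hsucc : ∀ v : V, ∃ w, (v, w) ∈ E)
    (i j n : ℕ) (hn : 1 ≤ n) (hj : 1 ≤ j)
    (LI LJ : V × V → ℕ)
    (hLI : ∀ e ∈ E, LI e ≤ 2 * i)
    (hLJ : ∀ e ∈ E, 1 ≤ LJ e ∧ LJ e ≤ 2 * j)
    (hevenI : EvenG E LI) (hevenJ : EvenG E LJ)
    (hbound : NBound E LI LJ n) :
    ∃ σj σi : List (V × V) → ℕ,
      ∀ ρ : ℕ → V, IsPath E ρ →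
        (∀ l, validReg 1 (2 * j) (σj (hist ρ (l+1)))) ∧
        (∀ l,
          (Even (LI (ρ l, ρ (l+1))) → σi (hist ρ (l+1)) = LI (ρ l, ρ (l+1))) ∧
          (¬ Even (LI (ρ l, ρ (l+1))) →
            ¬ Even (σi (hist ρ (l+1))) ∧ LI (ρ l, ρ (l+1)) ≤ σi (hist ρ (l+1)) ∧
              σi (hist ρ (l+1)) ≤ 2 * i + 1)) ∧
        (∀ l, ¬ instantLoss 1 (2 * j) (n+1)
          (traj (n+1) (initState (2 * i))
            (fun m => σj (hist ρ (m+1))) (fun m => σi (hist ρ (m+1))) l)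
          (σj (hist ρ (l+1)))) ∧
        ParityAccepting (fun l =>
          output (n+1)
            (traj (n+1) (initState (2 * i))
              (fun m => σj (hist ρ (m+1))) (fun m => σi (hist ρ (m+1))) l)
            (σj (hist ρ (l+1)))) := by
  refine ⟨EveAux.sigj LI LJ i j (n + 1), EveAux.sigi LI, fun ρ hρ => ?_⟩
  refine ⟨?_, ?_, ?_, ?_⟩
  · intro l
    rw [EveAux.sigj_hist]
    by_cases h0 : EveAux.Kp LI LJ i j (n + 1) ρ l = 0
    · exact Or.inl ⟨h0, rfl⟩
    · have := EveAux.Kp_le (LI := LI) (i := i) (n' := n + 1) hρ hLJ l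
      exact Or.inr ⟨by omega, by omega, by omega⟩
  · intro l
    rw [EveAux.sigi_hist]
    exact ⟨fun _ => rfl, fun h => ⟨h, le_rfl, by have := hLI _ (hρ l); omega⟩⟩
  · intro l
    rw [EveAux.traj_eq, EveAux.sigj_hist]
    exact EveAux.noLoss hρ hj hLJ hbound l
  · have hPJ := hevenJ ρ hρ
    have hpar := EveAux.parity hρ hj hLI hLJ hPJ hbound
    simp only [EveAux.traj_eq]
    simp only [EveAux.sigj_hist]
    exact hpar

end Stmt14
end

section
/- Let A and B be nondeterministic parity tree automata, t an input tree, and ρ_A, ρ_B accepting runs of A and B on t where ρ_A is guided by ρ_B via a guiding function g. If u ∈ {0,1}* and v ∈ {0,1}+ satisfy ρ_A(u) = ρ_A(u·v) and ρ_B(u) = ρ_B(u·v), and the greatest priority of ρ_B on the path segment from u to u·v is even, then the greatest priority of ρ_A on that segment is also even. -/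
/-- A nondeterministic parity tree automaton over the alphabet `A`: transitions are tuples
`(q, a, q₀, q₁)` and `Ω` assigns a pair of priorities to the two directions of each
transition. -/
structure NPA (A : Type) where
  Q : Type
  qinit : Q
  Δ : Set (Q × A × Q × Q)
  Ω : Q × A × Q × Q → ℕ × ℕ

namespace NPA

variable {A : Type}

/-- Tree positions are words over {0,1}, modelled as `List Bool`; the children of `u` are
`u ++ [false]` and `u ++ [true]`. -/
abbrev Pos := List Bool

/-- `ρ : Pos → Δ` is a run of the automaton `M` on the input tree `t`. -/
def IsRun (M : NPA A) (t : Pos → A) (ρ : Pos → M.Q × A × M.Q × M.Q) : Prop :=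
  (∀ u, ρ u ∈ M.Δ) ∧
  (∀ u, (ρ u).2.1 = t u) ∧
  (ρ []).1 = M.qinit ∧
  (∀ u (b : Bool), (ρ (u ++ [b])).1 = if b then (ρ u).2.2.2 else (ρ u).2.2.1)

/-- The prefix of length `m` of a branch `β`. -/
def pre (β : ℕ → Bool) (m : ℕ) : Pos := (List.range m).map β

/-- The priority seen at depth `m` along the branch `β` in the run `ρ`. -/
def branchPrio (M : NPA A) (ρ : Pos → M.Q × A × M.Q × M.Q) (β : ℕ → Bool) (m : ℕ) : ℕ :=
  if β m then (M.Ω (ρ (pre β m))).2 else (M.Ω (ρ (pre β m))).1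

/-- A run is accepting if the priority sequence of every branch is parity accepting. -/
def AcceptingRun (M : NPA A) (ρ : Pos → M.Q × A × M.Q × M.Q) : Prop :=
  ∀ β : ℕ → Bool, ParityAccepting (branchPrio M ρ β)

/-- `g` is a guiding function from `B` to `M`: `g (p, (q, a, q₀, q₁))` is a transition of
`M` from state `p` over the letter `a`. -/
def IsGuidingFun (M B : NPA A) (g : M.Q × (B.Q × A × B.Q × B.Q) → M.Q × A × M.Q × M.Q) :
    Prop :=
  ∀ p δ, (g (p, δ)).1 = p ∧ (g (p, δ)).2.1 = δ.2.1

/-- The run `ρM` is guided by the run `ρB` via `g`: at every position, the transition taken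
by `ρM` is obtained by applying `g` to its own source state and the transition of `ρB`. -/
def GuidedBy (M B : NPA A) (g : M.Q × (B.Q × A × B.Q × B.Q) → M.Q × A × M.Q × M.Q)
    (ρM : Pos → M.Q × A × M.Q × M.Q) (ρB : Pos → B.Q × A × B.Q × B.Q) : Prop :=
  ∀ u, ρM u = g ((ρM u).1, ρB u)

/-- `g` preserves acceptance: any guided run of `M` obtained from an accepting run of `B`
is accepting. -/
def PreservesAcceptance (M B : NPA A)
    (g : M.Q × (B.Q × A × B.Q × B.Q) → M.Q × A × M.Q × M.Q) : Prop :=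
  ∀ (t : Pos → A) ρB ρM, IsRun B t ρB → IsRun M t ρM → GuidedBy M B g ρM ρB →
    AcceptingRun B ρB → AcceptingRun M ρM

/-- The priority seen at step `m` of the path segment from `u` to `u ++ v` in the run `ρ`. -/
def segPrio (M : NPA A) (ρ : Pos → M.Q × A × M.Q × M.Q) (u v : Pos) (m : ℕ) : ℕ :=
  if v.getD m false then (M.Ω (ρ (u ++ v.take m))).2 else (M.Ω (ρ (u ++ v.take m))).1

/-- The greatest priority encountered on the path segment from `u` to `u ++ v`. -/
def segMax (M : NPA A) (ρ : Pos → M.Q × A × M.Q × M.Q) (u v : Pos) : ℕ :=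
  (Finset.range v.length).sup (segPrio M ρ u v)

end NPA

/-! Pump the segment from `u` to `u·v`: on the tree `t ∘ unpump u v`, in which that segment repeats
forever, `ρA ∘ unpump u v` and `ρB ∘ unpump u v` are runs (they take the same transition at `u` and
at `u·v`), and the first is still guided by the second. A branch of the pumped run of `B` either
returns to `u` infinitely often, and then eventually goes round the segment forever, so that its
limsup is `segMax B ρB u v`; or it eventually follows a branch of `ρB`. Either way it is accepting,
hence so is the pumped run of `A`. On the branch `u·v^ω` the latter repeats the priorities of the
segment with period `|v|`, so their maximum `segMax A ρA u v` is even. -/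

open Filter

theorem parityAccepting_add_iff (c : ℕ → ℕ) (a : ℕ) :
    ParityAccepting (fun n => c (a + n)) ↔ ParityAccepting c := by
  have hmap : map (a + ·) atTop = atTop := by
    simpa only [add_comm a] using map_add_atTop_eq_nat a
  unfold ParityAccepting
  conv_rhs => rw [← hmap]
  rfl

theorem parityAccepting_mod_iff {f : ℕ → ℕ} {k : ℕ} (hk : 0 < k) :
    ParityAccepting (fun n => f (n % k)) ↔ Even ((Finset.range k).sup f) := by
  have hsup (n : ℕ) : f (n % k) ≤ (Finset.range k).sup f :=
    Finset.le_sup (Finset.mem_range.2 (Nat.mod_lt n hk))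
  have hperiod {j : ℕ} (hj : j < k) (a : ℕ) : (j + a * k) % k = j := by
    rw [Nat.add_mul_mod_self_right, Nat.mod_eq_of_lt hj]
  constructor
  · rintro ⟨p, hp, hfreq, hle⟩
    obtain ⟨N, hN⟩ := hle.exists_forall_of_atTop
    obtain ⟨n, rfl⟩ := hfreq.exists
    suffices (Finset.range k).sup f = f (n % k) from this ▸ hp
    refine le_antisymm (Finset.sup_le fun j hj => ?_) (hsup n)
    simpa only [hperiod (Finset.mem_range.1 hj)] using hN (j + N * k) (by nlinarith)
  · intro heven
    obtain ⟨j, hj, hjmax⟩ := Finset.exists_mem_eq_sup _ ⟨0, Finset.mem_range.2 hk⟩ f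
    refine ⟨_, heven, frequently_atTop.2 fun a => ⟨j + a * k, by nlinarith, ?_⟩,
      Eventually.of_forall hsup⟩
    simp only [hperiod (Finset.mem_range.1 hj), hjmax]

namespace NPA

variable {A : Type}

theorem pre_succ (β : ℕ → Bool) (m : ℕ) : pre β (m + 1) = pre β m ++ [β m] := by
  simp [pre, List.range_succ]

theorem getElem_pre (β : ℕ → Bool) {m i : ℕ} (hi : i < (pre β m).length) :
    (pre β m)[i] = β i := by
  simp [pre]

def graft (w : Pos) (γ : ℕ → Bool) (i : ℕ) : Bool :=
  if i < w.length then w.getD i false else γ (i - w.length)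

theorem graft_length_add (w : Pos) (γ : ℕ → Bool) (n : ℕ) : graft w γ (w.length + n) = γ n := by
  simp [graft]

theorem pre_graft_length_add (w : Pos) (γ : ℕ → Bool) (n : ℕ) :
    pre (graft w γ) (w.length + n) = w ++ pre γ n := by
  refine List.ext_getElem (by simp [pre]) fun i h₁ _ => ?_
  rw [getElem_pre, graft, List.getElem_append]
  split_ifs with hi
  · exact List.getD_eq_getElem _ _ hi
  · rw [getElem_pre]

/-- The branch `u·v^ω`. -/
def pumpedBranch (u v : Pos) : ℕ → Bool :=
  graft u fun n => v.getD (n % v.length) false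

def unpumpStep (u v w : Pos) (b : Bool) : Pos :=
  if w ++ [b] = u ++ v then u else w ++ [b]

/-- The position of the original tree copied by a position of the pumped tree, in which the
segment from `u` to `u ++ v` repeats forever: read the position letter by letter, jumping back
to `u` whenever `u ++ v` is reached. -/
def unpump (u v w : Pos) : Pos :=
  w.foldl (unpumpStep u v) []

theorem unpump_concat (u v w : Pos) (b : Bool) :
    unpump u v (w ++ [b]) = unpumpStep u v (unpump u v w) b := by
  simp [unpump]

theorem unpump_eq_self {u v w : Pos} (h : ¬ u ++ v <+: w) : unpump u v w = w := by
  induction w using List.reverseRecOn with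
  | nil => rfl
  | append_singleton w b ih =>
    have hne : w ++ [b] ≠ u ++ v := fun he => h (he ▸ List.prefix_refl _)
    rw [unpump_concat, ih fun hp => h (hp.trans (List.prefix_append w [b])), unpumpStep,
      if_neg hne]

theorem unpumpStep_take {u v : Pos} {j : ℕ} (hj : j < v.length) :
    unpumpStep u v (u ++ v.take j) (v.getD j false) = u ++ v.take ((j + 1) % v.length) := by
  rw [unpumpStep, List.append_assoc, List.getD_eq_getElem _ _ hj, List.take_concat_get']
  rcases (show j + 1 ≤ v.length from hj).eq_or_lt with h | h
  · rw [if_pos (by rw [h, List.take_length]), h, Nat.mod_self, List.take_zero, List.append_nil]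
  · have hne : u ++ v.take (j + 1) ≠ u ++ v := fun he => by
      have := congrArg List.length he
      simp only [List.length_append, List.length_take, Nat.add_left_cancel_iff, inf_eq_right]
        at this
      omega
    rw [if_neg hne, Nat.mod_eq_of_lt h]

theorem take_append_singleton_prefix {v : Pos} {j : ℕ} {b : Bool} (hj : j < v.length)
    (h : v.take j ++ [b] <+: v) : b = v.getD j false := by
  rw [List.prefix_iff_eq_take] at h
  have h' : v.take j ++ [b] = v.take j ++ [v[j]] := by
    rw [List.take_concat_get', h]
    simp only [List.length_append, List.length_take, List.length_cons, List.length_nil,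
      zero_add, List.take_eq_take_iff]
    omega
  rw [List.getD_eq_getElem _ _ hj]
  exact List.singleton_inj.1 (List.append_cancel_left h')

theorem IsRun.comp_unpump {M : NPA A} {t : Pos → A} {ρ : Pos → M.Q × A × M.Q × M.Q}
    (h : IsRun M t ρ) {u v : Pos} (huv : ρ u = ρ (u ++ v)) :
    IsRun M (t ∘ unpump u v) (ρ ∘ unpump u v) := by
  obtain ⟨hΔ, hlabel, hinit, hsucc⟩ := h
  refine ⟨fun w => hΔ _, fun w => hlabel _, hinit, fun w b => ?_⟩
  simp only [Function.comp_apply, unpump_concat, unpumpStep]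
  by_cases hret : unpump u v w ++ [b] = u ++ v
  · rw [if_pos hret, huv, ← hret, hsucc]
  · rw [if_neg hret, hsucc]

section Branch

variable {u v : Pos} {β : ℕ → Bool}

theorem unpump_pre_add_of_forall_ne {m : ℕ}
    (h : ∀ n, unpump u v (pre β (m + n)) ++ [β (m + n)] ≠ u ++ v) (n : ℕ) :
    unpump u v (pre β (m + n)) = unpump u v (pre β m) ++ pre (fun i => β (m + i)) n := by
  induction n with
  | zero => simp [pre]
  | succ n ih =>
    rw [← add_assoc, pre_succ, unpump_concat, unpumpStep, if_neg (h n), ih, pre_succ,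
      List.append_assoc]

theorem not_prefix_unpump_pre {m m' : ℕ} (h : ¬ unpump u v (pre β m) <+: u ++ v) (hm : m ≤ m') :
    ¬ unpump u v (pre β m') <+: u ++ v := by
  induction m', hm using Nat.le_induction with
  | base => exact h
  | succ m' _ ih =>
    have hne : unpump u v (pre β m') ++ [β m'] ≠ u ++ v :=
      fun he => ih (he ▸ List.prefix_append _ _)
    rw [pre_succ, unpump_concat, unpumpStep, if_neg hne]
    exact fun hp => ih ((List.prefix_append _ _).trans hp)

/-- A branch that returns to `u` infinitely often follows `v` whenever it is inside the segment:
leaving it means reaching a position off `u ++ v`, from which no return is possible. -/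
theorem getD_eq_of_frequently_return {m j : ℕ} (hj : j < v.length)
    (hm : unpump u v (pre β m) = u ++ v.take j)
    (hret : ∃ᶠ m' in atTop, unpump u v (pre β m') ++ [β m'] = u ++ v) :
    β m = v.getD j false := by
  by_contra hb
  have hoff : ¬ u ++ v.take j ++ [β m] <+: u ++ v := by
    rw [List.append_assoc, List.prefix_append_right_inj]
    exact fun hp => hb (take_append_singleton_prefix hj hp)
  have hne : u ++ v.take j ++ [β m] ≠ u ++ v := fun he => hoff (he ▸ List.prefix_refl _)
  have hstuck : ¬ unpump u v (pre β (m + 1)) <+: u ++ v := by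
    rwa [pre_succ, unpump_concat, unpumpStep, hm, if_neg hne]
  obtain ⟨m', hm', hret'⟩ := frequently_atTop.1 hret (m + 1)
  exact not_prefix_unpump_pre hstuck hm' (hret' ▸ List.prefix_append _ _)

theorem unpump_pre_add_of_follows (hv : v ≠ []) {m : ℕ} (hm : unpump u v (pre β m) = u)
    (hβ : ∀ n, unpump u v (pre β (m + n)) = u ++ v.take (n % v.length) →
      β (m + n) = v.getD (n % v.length) false) (n : ℕ) :
    unpump u v (pre β (m + n)) = u ++ v.take (n % v.length) := by
  induction n with
  | zero => simpa using hm
  | succ n ih =>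
    rw [← add_assoc, pre_succ, unpump_concat, ih, hβ n ih,
      unpumpStep_take (Nat.mod_lt _ (List.length_pos_iff.2 hv)), Nat.mod_add_mod]

theorem parityAccepting_iff_even_segMax (M : NPA A) (ρ : Pos → M.Q × A × M.Q × M.Q)
    (hv : v ≠ []) {m : ℕ} (hm : unpump u v (pre β m) = u)
    (hβ : ∀ n, unpump u v (pre β (m + n)) = u ++ v.take (n % v.length) →
      β (m + n) = v.getD (n % v.length) false) :
    ParityAccepting (branchPrio M (ρ ∘ unpump u v) β) ↔ Even (segMax M ρ u v) := by
  rw [← parityAccepting_add_iff _ m, segMax,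
    ← parityAccepting_mod_iff (List.length_pos_iff.2 hv)]
  refine Iff.of_eq (congrArg _ (funext fun n => ?_))
  have h := unpump_pre_add_of_follows hv hm hβ n
  simp only [branchPrio, segPrio, Function.comp_apply, h, hβ n h]

end Branch

theorem AcceptingRun.comp_unpump {M : NPA A} {ρ : Pos → M.Q × A × M.Q × M.Q}
    (hacc : AcceptingRun M ρ) {u v : Pos} (hv : v ≠ []) (heven : Even (segMax M ρ u v)) :
    AcceptingRun M (ρ ∘ unpump u v) := by
  intro β
  by_cases hret : ∃ᶠ m in atTop, unpump u v (pre β m) ++ [β m] = u ++ v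
  · obtain ⟨m, hm⟩ := hret.exists
    refine (parityAccepting_iff_even_segMax M ρ hv (m := m + 1) ?_
      fun n hn => getD_eq_of_frequently_return (Nat.mod_lt _ (List.length_pos_iff.2 hv)) hn hret).2
      heven
    rw [pre_succ, unpump_concat, unpumpStep, if_pos hm]
  · obtain ⟨m, hm⟩ := (not_frequently.1 hret).exists_forall_of_atTop
    have hshift (n : ℕ) : branchPrio M (ρ ∘ unpump u v) β (m + n) =
        branchPrio M ρ (graft (unpump u v (pre β m)) fun i => β (m + i))
          ((unpump u v (pre β m)).length + n) := by
      simp only [branchPrio, Function.comp_apply, graft_length_add, pre_graft_length_add,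
        unpump_pre_add_of_forall_ne (fun n => hm (m + n) (Nat.le_add_right m n)) n]
    rw [← parityAccepting_add_iff _ m, funext hshift]
    exact (parityAccepting_add_iff _ _).2 (hacc _)

theorem parityAccepting_pumpedBranch_iff (M : NPA A) (ρ : Pos → M.Q × A × M.Q × M.Q)
    {u v : Pos} (hv : v ≠ []) :
    ParityAccepting (branchPrio M (ρ ∘ unpump u v) (pumpedBranch u v)) ↔
      Even (segMax M ρ u v) := by
  refine parityAccepting_iff_even_segMax M ρ hv (m := u.length) ?_
    fun n _ => graft_length_add _ _ n
  have hu : pre (pumpedBranch u v) u.length = u := by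
    unfold pumpedBranch
    simpa [pre] using pre_graft_length_add u (fun n => v.getD (n % v.length) false) 0
  rw [hu, unpump_eq_self]
  exact fun hp => hv (by simpa using hp.length_le)

end NPA

open NPA in
theorem pumping_general {Alph : Type} (A B : NPA Alph) (t : NPA.Pos → Alph)
    (ρA : NPA.Pos → A.Q × Alph × A.Q × A.Q) (ρB : NPA.Pos → B.Q × Alph × B.Q × B.Q)
    (hrunA : IsRun A t ρA) (hrunB : IsRun B t ρB)
    (haccB : AcceptingRun B ρB)
    (g : A.Q × (B.Q × Alph × B.Q × B.Q) → A.Q × Alph × A.Q × A.Q)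
    (hpres : PreservesAcceptance A B g)
    (hguided : GuidedBy A B g ρA ρB)
    (u v : NPA.Pos) (hv : v ≠ [])
    (hAu : ρA u = ρA (u ++ v)) (hBu : ρB u = ρB (u ++ v))
    (heven : Even (segMax B ρB u v)) :
    Even (segMax A ρA u v) := by
  have haccPumped : AcceptingRun A (ρA ∘ unpump u v) :=
    hpres _ _ _ (hrunB.comp_unpump hBu) (hrunA.comp_unpump hAu) (fun w => hguided _)
      (haccB.comp_unpump hv heven)
  exact (parityAccepting_pumpedBranch_iff A ρA hv).1 (haccPumped (pumpedBranch u v))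

open NPA in
/-- pumping: let ρ_A, ρ_B be accepting runs of A and B on t, with ρ_A guided
by ρ_B via an acceptance-preserving guiding function g.  If u, v (v nonempty) satisfy
ρ_A(u) = ρ_A(u·v) and ρ_B(u) = ρ_B(u·v), and the greatest priority of ρ_B on the segment
from u to u·v is even, then so is the greatest priority of ρ_A on that segment. -/
theorem pumping {Alph : Type} (A B : NPA Alph) (t : NPA.Pos → Alph)
    (ρA : NPA.Pos → A.Q × Alph × A.Q × A.Q) (ρB : NPA.Pos → B.Q × Alph × B.Q × B.Q)
    (hrunA : IsRun A t ρA) (hrunB : IsRun B t ρB)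
    (haccA : AcceptingRun A ρA) (haccB : AcceptingRun B ρB)
    (g : A.Q × (B.Q × Alph × B.Q × B.Q) → A.Q × Alph × A.Q × A.Q)
    (hg : IsGuidingFun A B g) (hpres : PreservesAcceptance A B g)
    (hguided : GuidedBy A B g ρA ρB)
    (u v : NPA.Pos) (hv : v ≠ [])
    (hAu : ρA u = ρA (u ++ v)) (hBu : ρB u = ρB (u ++ v))
    (heven : Even (segMax B ρB u v)) :
    Even (segMax A ρA u v) :=
  pumping_general A B t ρA ρB hrunA hrunB haccB g hpres hguided u v hv hAu hBu heven
end
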